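/- arXiv:2504.19167 — 8 statements merged into one kernel-verified Lean document; each statement's English description precedes it below -/
import Mathlib

section
/- Let G = (I ∪ C, E) be a split graph where C induces a maximal clique and I an independent set, and let D be a transitive orientation of G whose restriction to C contains a Hamiltonian directed path c₁ → c₂ → ⋯ → c_k of the clique C (k = |C|). Then every vertex a ∈ I falls into exactly one of three types: (1) N(a) = {c₁,…,c_m} ∪ {c_n,…,c_k} for some 1 ≤ m < n ≤ k with edges oriented c_i → a for i ≤ m and a → c_i for i ≥ n; (2) N(a) = {c₁,…,c_r} for some r < k with all edges oriented into a (a is a sink); or (3) N(a) = {c_l,…,c_k} for some l > 1 with all edges oriented out of a (a is a source). -/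
section Defs

variable {V : Type*}

/-- An orientation of a simple graph: each edge gets exactly one direction. -/
def IsOrientation (G : SimpleGraph V) (D : V → V → Prop) : Prop :=
  (∀ a b, G.Adj a b ↔ (D a b ∨ D b a)) ∧ (∀ a b, D a b → ¬ D b a)

/-- A transitive orientation. -/
def IsTransitiveOrientation (G : SimpleGraph V) (D : V → V → Prop) : Prop :=
  IsOrientation G D ∧ ∀ a b c, D a b → D b c → D a c

/-- `I, C` is a split partition of `G`: `I` independent, `C` a clique, covering `V`. -/
def IsSplitPartition (G : SimpleGraph V) (I C : Set V) : Prop :=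
  I ∪ C = Set.univ ∧ Disjoint I C ∧
    (∀ a ∈ I, ∀ b ∈ I, ¬ G.Adj a b) ∧
    (∀ a ∈ C, ∀ b ∈ C, a ≠ b → G.Adj a b)

/-- The clique `C` is inclusion-wise maximal: no vertex of `I` is adjacent to all of `C`. -/
def IsMaxCliquePartition (G : SimpleGraph V) (I C : Set V) : Prop :=
  ∀ a ∈ I, ∃ v ∈ C, ¬ G.Adj a v

/-- `N(a) = [1,m] ∪ [n,k]` (1-indexed labels; `c i` is the vertex with label `i+1`). -/
def Form1 (G : SimpleGraph V) {k : ℕ} (c : Fin k → V) (a : V) (m n : ℕ) : Prop :=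
  1 ≤ m ∧ m < n ∧ n ≤ k ∧
    ∀ i : Fin k, G.Adj a (c i) ↔ (i.val + 1 ≤ m ∨ n ≤ i.val + 1)

/-- `N(a) = [1,r]` with `r < k`. -/
def Form2 (G : SimpleGraph V) {k : ℕ} (c : Fin k → V) (a : V) (r : ℕ) : Prop :=
  r < k ∧ ∀ i : Fin k, G.Adj a (c i) ↔ i.val + 1 ≤ r

/-- `N(a) = [l,k]` with `l > 1`. -/
def Form3 (G : SimpleGraph V) {k : ℕ} (c : Fin k → V) (a : V) (l : ℕ) : Prop :=
  1 < l ∧ l ≤ k ∧ ∀ i : Fin k, G.Adj a (c i) ↔ l ≤ i.val + 1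

/-- Properties (i)–(v) of the characterization of split comparability graphs. -/
def GoodLabeling (G : SimpleGraph V) (I : Set V) {k : ℕ} (c : Fin k → V) : Prop :=
  (∀ a ∈ I, (∃ m n, Form1 G c a m n) ∨ (∃ r, Form2 G c a r) ∨ (∃ l, Form3 G c a l)) ∧
  (∀ a ∈ I, ∀ b ∈ I, ∀ r l, Form2 G c a r → Form3 G c b l → r < l) ∧
  (∀ a ∈ I, ∀ b ∈ I, ∀ m n r, Form1 G c a m n → Form2 G c b r → r < n) ∧
  (∀ a ∈ I, ∀ b ∈ I, ∀ m n l, Form1 G c a m n → Form3 G c b l → m < l) ∧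
  (∀ a ∈ I, ∀ b ∈ I, ∀ m n m' n', Form1 G c a m n → Form1 G c b m' n' → m < n' ∧ m' < n)

/-- Letters `a` and `b` alternate in the word `w`. -/
def Alternates [DecidableEq V] (w : List V) (a b : V) : Prop :=
  (w.filter fun x => x = a ∨ x = b).Chain' (· ≠ ·)

/-- `p` is a permutation of `V`: every element occurs exactly once. -/
def IsPermutationOf [DecidableEq V] (p : List V) : Prop :=
  p.Nodup ∧ ∀ v : V, v ∈ p

/-- The word `w` represents the graph `G`. -/
def Represents [DecidableEq V] (w : List V) (G : SimpleGraph V) : Prop :=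
  ∀ a b : V, a ≠ b → (G.Adj a b ↔ Alternates w a b)

/-- `G` is permutationally `k`-representable (so `ℛᵖ(G) ≤ k`). -/
def PrnLe [DecidableEq V] (G : SimpleGraph V) (k : ℕ) : Prop :=
  ∃ ps : List (List V), ps.length = k ∧ (∀ p ∈ ps, IsPermutationOf p) ∧
    Represents ps.flatten G

/-- The graph `B₄`: a 4-clique `{0,1,2,3}` together with independent vertices `4, 5, 6`
with neighborhoods `{0,1}`, `{1,2}`, `{2,3}` respectively. -/
def B4 : SimpleGraph (Fin 7) :=
  SimpleGraph.fromRel fun a b =>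
    (a.val ≤ 3 ∧ b.val ≤ 3) ∨ (a = 4 ∧ (b = 0 ∨ b = 1)) ∨
      (a = 5 ∧ (b = 1 ∨ b = 2)) ∨ (a = 6 ∧ (b = 2 ∨ b = 3))

/-- `G` contains `B₄` as an induced subgraph. -/
def HasB4 (G : SimpleGraph V) : Prop :=
  ∃ f : Fin 7 → V, Function.Injective f ∧ ∀ u v, B4.Adj u v ↔ G.Adj (f u) (f v)

/-- A semi-transitive orientation: acyclic, and every directed path is either
not a "shortcut" situation or has all chords. -/
def IsSemiTransitive (G : SimpleGraph V) (D : V → V → Prop) : Prop :=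
  (∀ a, ¬ Relation.TransGen D a a) ∧
    ∀ (l : List V) (h : l ≠ []), l.Chain' D →
      ¬ G.Adj (l.head h) (l.getLast h) ∨
        ∀ i j : Fin l.length, i < j → D (l.get i) (l.get j)

/-- The comparability graph of a partial order. -/
def compGraph (α : Type*) [PartialOrder α] : SimpleGraph α where
  Adj a b := a ≠ b ∧ (a ≤ b ∨ b ≤ a)
  symm := ⟨fun _ _ h => ⟨h.1.symm, h.2.symm⟩⟩
  loopless := ⟨fun _ h => h.1 rfl⟩

end Defs

/-- A vertex of type (a): mixed. -/
def T1 {V : Type*} (G : SimpleGraph V) (D : V → V → Prop) {k : ℕ} (c : Fin k → V) (a : V) : Prop :=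
  ∃ m n, Form1 G c a m n ∧ (∀ i : Fin k, i.val + 1 ≤ m → D (c i) a) ∧
    (∀ i : Fin k, n ≤ i.val + 1 → D a (c i))

/-- A vertex of type (b): a sink with neighborhood `[1,r]`, `r < k`. -/
def T2 {V : Type*} (G : SimpleGraph V) (D : V → V → Prop) {k : ℕ} (c : Fin k → V) (a : V) : Prop :=
  ∃ r, Form2 G c a r ∧ ∀ i : Fin k, i.val + 1 ≤ r → D (c i) a

/-- A vertex of type (c): a source with neighborhood `[l,k]`, `l > 1`. -/
def T3 {V : Type*} (G : SimpleGraph V) (D : V → V → Prop) {k : ℕ} (c : Fin k → V) (a : V) : Prop :=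
  ∃ l, Form3 G c a l ∧ ∀ i : Fin k, l ≤ i.val + 1 → D a (c i)

theorem stmt0 {V : Type*} (G : SimpleGraph V) (I C : Set V)
    (hsplit : IsSplitPartition G I C) (hmax : IsMaxCliquePartition G I C)
    (D : V → V → Prop) (hD : IsTransitiveOrientation G D)
    (k : ℕ) (c : Fin k → V) (hinj : Function.Injective c) (hrange : Set.range c = C)
    (hpath : ∀ i j : Fin k, i < j → D (c i) (c j)) :
    ∀ a ∈ I,
      (T1 G D c a ∨ T2 G D c a ∨ T3 G D c a) ∧
      ¬(T1 G D c a ∧ T2 G D c a) ∧ ¬(T1 G D c a ∧ T3 G D c a) ∧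
      ¬(T2 G D c a ∧ T3 G D c a) := by
  classical
  intro a ha
  obtain ⟨horient, htrans⟩ := hD
  obtain ⟨hor, hasym⟩ := horient
  obtain ⟨hcov, hdisj, hind, hclq⟩ := hsplit
  -- basic facts
  have hadj : ∀ i : Fin k, G.Adj a (c i) ↔ (D a (c i) ∨ D (c i) a) := fun i => hor a (c i)
  obtain ⟨v, hvC, hvnadj⟩ := hmax a ha
  obtain ⟨i₀, rfl⟩ : ∃ i, c i = v := by
    have : v ∈ Set.range c := hrange ▸ hvC
    exact this
  have hnin : ¬ D (c i₀) a := fun h => hvnadj ((hadj i₀).2 (Or.inr h))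
  have hnout : ¬ D a (c i₀) := fun h => hvnadj ((hadj i₀).2 (Or.inl h))
  have hdown : ∀ i j : Fin k, j ≤ i → D (c i) a → D (c j) a := by
    intro i j hji h
    rcases lt_or_eq_of_le hji with hlt | heq
    · exact htrans _ _ _ (hpath j i hlt) h
    · rwa [heq]
  have hup : ∀ i j : Fin k, i ≤ j → D a (c i) → D a (c j) := by
    intro i j hij h
    rcases lt_or_eq_of_le hij with hlt | heq
    · exact htrans _ _ _ h (hpath i j hlt)
    · rwa [← heq]
  have hsep : ∀ i j : Fin k, D (c i) a → D a (c j) → j ≤ i → False := by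
    intro i j hi hj hji
    exact hasym _ _ hi (hup j i hji hj)
  have hinlt : ∀ i : Fin k, D (c i) a → i < i₀ := by
    intro i h
    by_contra hc
    exact hnin (hdown i i₀ (le_of_not_gt hc) h)
  have houtgt : ∀ i : Fin k, D a (c i) → i₀ < i := by
    intro i h
    by_contra hc
    exact hnout (hup i i₀ (le_of_not_gt hc) h)
  constructor
  · -- existence
    by_cases hin : ∃ i : Fin k, D (c i) a
    · have hSin : (Finset.univ.filter fun i : Fin k => D (c i) a).Nonempty := by
        obtain ⟨i, hi⟩ := hin
        exact ⟨i, by simp [hi]⟩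
      set M := (Finset.univ.filter fun i : Fin k => D (c i) a).max' hSin with hM
      have hMmem : D (c M) a := by
        have := (Finset.univ.filter fun i : Fin k => D (c i) a).max'_mem hSin
        simpa using this
      have hleM : ∀ i : Fin k, D (c i) a → i ≤ M :=
        fun i hi => Finset.le_max' _ i (by simp [hi])
      by_cases hout : ∃ j : Fin k, D a (c j)
      · -- T1
        have hSout : (Finset.univ.filter fun i : Fin k => D a (c i)).Nonempty := by
          obtain ⟨j, hj⟩ := hout
          exact ⟨j, by simp [hj]⟩
        set N := (Finset.univ.filter fun i : Fin k => D a (c i)).min' hSout with hN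
        have hNmem : D a (c N) := by
          have := (Finset.univ.filter fun i : Fin k => D a (c i)).min'_mem hSout
          simpa using this
        have hNle : ∀ i : Fin k, D a (c i) → N ≤ i :=
          fun i hi => Finset.min'_le _ i (by simp [hi])
        left
        refine ⟨M.val + 1, N.val + 1, ⟨Nat.le_add_left 1 _, ?_, ?_, ?_⟩, ?_, ?_⟩
        · have : M < N := by
            by_contra hc
            exact hsep M N hMmem hNmem (le_of_not_gt hc)
          omega
        · have := N.isLt; omega
        · intro i
          rw [hadj i]
          constructor
          · rintro (h | h)
            · right; have := hNle i h; omega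
            · left; have := hleM i h; omega
          · rintro (h | h)
            · exact Or.inr (hdown M i (by omega : i ≤ M) hMmem)
            · exact Or.inl (hup N i (by omega : N ≤ i) hNmem)
        · intro i hi
          exact hdown M i (by omega : i ≤ M) hMmem
        · intro i hi
          exact hup N i (by omega : N ≤ i) hNmem
      · -- T2 with r = M+1
        right; left
        push_neg at hout
        refine ⟨M.val + 1, ⟨?_, ?_⟩, ?_⟩
        · have h1 := hinlt M hMmem
          have h2 := i₀.isLt
          omega
        · intro i
          rw [hadj i]
          constructor
          · rintro (h | h)
            · exact absurd h (hout i)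
            · have := hleM i h; omega
          · intro h
            exact Or.inr (hdown M i (by omega : i ≤ M) hMmem)
        · intro i hi
          exact hdown M i (by omega : i ≤ M) hMmem
    · by_cases hout : ∃ j : Fin k, D a (c j)
      · -- T3 with l = N+1
        right; right
        push_neg at hin
        have hSout : (Finset.univ.filter fun i : Fin k => D a (c i)).Nonempty := by
          obtain ⟨j, hj⟩ := hout
          exact ⟨j, by simp [hj]⟩
        set N := (Finset.univ.filter fun i : Fin k => D a (c i)).min' hSout with hN
        have hNmem : D a (c N) := by
          have := (Finset.univ.filter fun i : Fin k => D a (c i)).min'_mem hSout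
          simpa using this
        have hNle : ∀ i : Fin k, D a (c i) → N ≤ i :=
          fun i hi => Finset.min'_le _ i (by simp [hi])
        refine ⟨N.val + 1, ⟨?_, ?_, ?_⟩, ?_⟩
        · have h1 := houtgt N hNmem
          have h2 : (i₀ : ℕ) < N := h1
          omega
        · have := N.isLt; omega
        · intro i
          rw [hadj i]
          constructor
          · rintro (h | h)
            · have := hNle i h; omega
            · exact absurd h (hin i)
          · intro h
            exact Or.inl (hup N i (by omega : N ≤ i) hNmem)
        · intro i hi
          exact hup N i (by omega : N ≤ i) hNmem
      · -- no neighbors: T2 with r = 0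
        right; left
        push_neg at hin; push_neg at hout
        refine ⟨0, ⟨i₀.isLt.trans_le (le_refl k) |>.trans_le (le_refl k) |> fun _ => ?_, ?_⟩, ?_⟩
        · exact Nat.pos_of_ne_zero (by have := i₀.isLt; omega)
        · intro i
          rw [hadj i]
          constructor
          · rintro (h | h)
            · exact absurd h (hout i)
            · exact absurd h (hin i)
          · omega
        · intro i hi; omega
  · refine ⟨?_, ?_, ?_⟩
    · rintro ⟨⟨m, n, ⟨hm1, hmn, hnk, hform1⟩, _, _⟩, ⟨r, ⟨hrk, hform2⟩, _⟩⟩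
      have hk : 0 < k := by omega
      have j : Fin k := ⟨k - 1, by omega⟩
      have h1 : G.Adj a (c ⟨k - 1, by omega⟩) := (hform1 ⟨k - 1, by omega⟩).2 (by simp; omega)
      have h2 := (hform2 ⟨k - 1, by omega⟩).1 h1
      simp at h2; omega
    · rintro ⟨⟨m, n, ⟨hm1, hmn, hnk, hform1⟩, _, _⟩, ⟨l, ⟨hl1, hlk, hform3⟩, _⟩⟩
      have hk : 0 < k := by omega
      have h1 : G.Adj a (c ⟨0, hk⟩) := (hform1 ⟨0, hk⟩).2 (by simp; omega)
      have h2 := (hform3 ⟨0, hk⟩).1 h1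
      simp at h2; omega
    · rintro ⟨⟨r, ⟨hrk, hform2⟩, _⟩, ⟨l, ⟨hl1, hlk, hform3⟩, _⟩⟩
      have hk : 0 < k := by omega
      have h1 : G.Adj a (c ⟨k - 1, by omega⟩) := (hform3 ⟨k - 1, by omega⟩).2 (by simp; omega)
      have h2 := (hform2 ⟨k - 1, by omega⟩).1 h1
      simp at h2; omega
end

section
/- Let G = (I ∪ C, E) be a split graph with maximal clique C, and let D be a transitive orientation of G whose restriction to C is the linear order c₁ → ⋯ → c_k. If a ∈ I is a source in D with N(a) = {c_l,…,c_r} consecutive in this order, then r = k and l > 1. -/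
theorem stmt2 {V : Type*} (G : SimpleGraph V) (I C : Set V)
    (hsplit : IsSplitPartition G I C) (hmax : IsMaxCliquePartition G I C)
    (D : V → V → Prop) (hD : IsTransitiveOrientation G D)
    (k : ℕ) (c : Fin k → V) (hinj : Function.Injective c) (hrange : Set.range c = C)
    (hlin : ∀ i j : Fin k, D (c i) (c j) ↔ i < j)
    (a : V) (ha : a ∈ I) (hsource : ∀ b, G.Adj a b → D a b)
    (l r : ℕ) (hl : 1 ≤ l) (hlr : l ≤ r) (hrk : r ≤ k)
    (hN : ∀ i : Fin k, G.Adj a (c i) ↔ (l ≤ i.val + 1 ∧ i.val + 1 ≤ r)) :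
    r = k ∧ 1 < l := by
  obtain ⟨⟨horient, _⟩, htrans⟩ := hD
  have hr1 : 1 ≤ r := le_trans hl hlr
  have hreq : r = k := by
    by_contra hrk'
    have hrlt : r < k := lt_of_le_of_ne hrk hrk'
    have hrm : r - 1 < k := lt_of_le_of_lt (Nat.sub_le r 1) hrlt
    set i : Fin k := ⟨r - 1, hrm⟩
    set j : Fin k := ⟨r, hrlt⟩
    have hadj : G.Adj a (c i) := by
      rw [hN]
      constructor
      · simpa [i, Nat.sub_add_cancel hr1] using hlr
      · simp [i, Nat.sub_add_cancel hr1]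
    have h1 : D a (c i) := hsource _ hadj
    have h2 : D (c i) (c j) := by
      rw [hlin]
      exact Nat.sub_lt_self one_pos hr1
    have h3 : D a (c j) := htrans _ _ _ h1 h2
    have hadj2 : G.Adj a (c j) := (horient a (c j)).mpr (Or.inl h3)
    have := (hN j).mp hadj2
    simp only [i, j] at this
    omega
  refine ⟨hreq, ?_⟩
  by_contra hl'
  have hl1 : l = 1 := by omega
  obtain ⟨v, hv, hnadj⟩ := hmax a ha
  obtain ⟨i, rfl⟩ := hrange ▸ hv
  exact hnadj ((hN i).mpr ⟨by omega, by omega⟩)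
end

section
/- Let G = (I ∪ C, E) be a split graph with |C| = k and suppose the vertices of C are labeled 1,…,k so that for all a, b ∈ I: (i) N(a) ∩ C is of the form [1,m] ∪ [n,k] with m < n, or [1,r] with r < k, or [l,k] with l > 1; (ii) if N(a) = [1,r] and N(b) = [l,k] then r < l; (iii) if N(a) = [1,m] ∪ [n,k] and N(b) = [1,r] then r < n; (iv) if N(a) = [1,m] ∪ [n,k] and N(b) = [l,k] then m < l; (v) if N(a) = [1,m] ∪ [n,k] and N(b) = [1,m'] ∪ [n',k] then m < n' and m' < n. Then G admits a transitive orientation. -/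
theorem stmt4 {V : Type*} (G : SimpleGraph V) (I C : Set V)
    (hsplit : IsSplitPartition G I C) (hmax : IsMaxCliquePartition G I C)
    (k : ℕ) (c : Fin k → V) (hinj : Function.Injective c) (hrange : Set.range c = C)
    (hgood : GoodLabeling G I c) :
    ∃ D : V → V → Prop, IsTransitiveOrientation G D := by
  classical
  obtain ⟨hcov, hdisj, hind, hclique⟩ := hsplit
  obtain ⟨hg1, hg2, hg3, hg4, hg5⟩ := hgood
  -- membership helpers
  have hcI : ∀ (i : Fin k), c i ∈ C := by
    intro i; rw [← hrange]; exact ⟨i, rfl⟩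
  have hIC : ∀ v, v ∈ I → ∀ i : Fin k, v = c i → False := by
    intro v hv i hvi
    exact (Set.disjoint_left.mp hdisj hv) (hvi ▸ hcI i)
  -- choose low/high data for each vertex of I
  have H : ∀ a : V, ∃ lo hi : ℕ, a ∈ I →
      lo < hi ∧ (∀ i : Fin k, G.Adj a (c i) ↔ (i.val + 1 ≤ lo ∨ hi ≤ i.val + 1)) ∧
      (Form1 G c a lo hi ∨ (Form2 G c a lo ∧ hi = k + 1) ∨
        (Form3 G c a hi ∧ lo = 0)) := by
    intro a
    by_cases ha : a ∈ I
    · rcases hg1 a ha with ⟨m, n, hf⟩ | ⟨r, hf⟩ | ⟨l, hf⟩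
      · exact ⟨m, n, fun _ => ⟨hf.2.1, hf.2.2.2, Or.inl hf⟩⟩
      · refine ⟨r, k + 1, fun _ => ⟨by have := hf.1; omega, ?_, Or.inr (Or.inl ⟨hf, rfl⟩)⟩⟩
        intro i
        have := hf.2 i
        have hik := i.isLt
        constructor
        · intro h; exact Or.inl (this.mp h)
        · rintro (h | h); · exact this.mpr h
          · omega
      · refine ⟨0, l, fun _ => ⟨by have := hf.1; omega, ?_, Or.inr (Or.inr ⟨hf, rfl⟩)⟩⟩
        intro i
        have := hf.2.2 i
        constructor
        · intro h; exact Or.inr (this.mp h)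
        · rintro (h | h); · omega
          · exact this.mpr h
    · exact ⟨0, 1, fun h => absurd h ha⟩
  choose lo hi hH using H
  have hlt : ∀ a, a ∈ I → lo a < hi a := fun a ha => (hH a ha).1
  have hadj : ∀ a, a ∈ I → ∀ i : Fin k,
      G.Adj a (c i) ↔ (i.val + 1 ≤ lo a ∨ hi a ≤ i.val + 1) :=
    fun a ha => (hH a ha).2.1
  -- key cross condition : lo b < hi a for all a b ∈ I
  have hcross : ∀ a, a ∈ I → ∀ b, b ∈ I → lo b < hi a := by
    intro a ha b hb
    rcases (hH a ha).2.2 with hfa | ⟨hfa, hae⟩ | ⟨hfa, hae⟩ <;>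
      rcases (hH b hb).2.2 with hfb | ⟨hfb, hbe⟩ | ⟨hfb, hbe⟩
    · exact (hg5 a ha b hb _ _ _ _ hfa hfb).2
    · exact hg3 a ha b hb _ _ _ hfa hfb
    · have h0 := hfa.1; have h0' := hfa.2.1; omega
    · have h1 := hfb.1; have h2 := hfb.2.1; have h3 := hfb.2.2.1; omega
    · have := hfb.1; omega
    · omega
    · exact hg4 b hb a ha _ _ _ hfb hfa
    · exact hg2 b hb a ha _ _ hfb hfa
    · have := hfa.1; omega
  -- define the orientation
  refine ⟨fun x y =>
    (∃ i j : Fin k, i < j ∧ x = c i ∧ y = c j) ∨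
    (∃ i : Fin k, y ∈ I ∧ x = c i ∧ i.val + 1 ≤ lo y) ∨
    (∃ j : Fin k, x ∈ I ∧ y = c j ∧ hi x ≤ j.val + 1), ⟨⟨?_, ?_⟩, ?_⟩⟩
  · -- orientation covers exactly the edges
    intro a b
    constructor
    · intro hab
      have ha : a ∈ I ∪ C := hcov ▸ Set.mem_univ a
      have hb : b ∈ I ∪ C := hcov ▸ Set.mem_univ b
      rcases ha with ha | ha <;> rcases hb with hb | hb
      · exact absurd hab (hind a ha b hb)
      · obtain ⟨j, rfl⟩ := (hrange ▸ hb : b ∈ Set.range c)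
        rcases (hadj a ha j).mp hab with h | h
        · exact Or.inr (Or.inr (Or.inl ⟨j, ha, rfl, h⟩))
        · exact Or.inl (Or.inr (Or.inr ⟨j, ha, rfl, h⟩))
      · obtain ⟨i, rfl⟩ := (hrange ▸ ha : a ∈ Set.range c)
        rcases (hadj b hb i).mp hab.symm with h | h
        · exact Or.inl (Or.inr (Or.inl ⟨i, hb, rfl, h⟩))
        · exact Or.inr (Or.inr (Or.inr ⟨i, hb, rfl, h⟩))
      · obtain ⟨i, rfl⟩ := (hrange ▸ ha : a ∈ Set.range c)
        obtain ⟨j, rfl⟩ := (hrange ▸ hb : b ∈ Set.range c)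
        have hij : i ≠ j := fun h => G.irrefl (h ▸ hab)
        rcases lt_or_gt_of_ne hij with h | h
        · exact Or.inl (Or.inl ⟨i, j, h, rfl, rfl⟩)
        · exact Or.inr (Or.inl ⟨j, i, h, rfl, rfl⟩)
    · have key : ∀ x y : V,
          ((∃ i j : Fin k, i < j ∧ x = c i ∧ y = c j) ∨
           (∃ i : Fin k, y ∈ I ∧ x = c i ∧ i.val + 1 ≤ lo y) ∨
           (∃ j : Fin k, x ∈ I ∧ y = c j ∧ hi x ≤ j.val + 1)) → G.Adj x y := by
        rintro x y (⟨i, j, hij, rfl, rfl⟩ | ⟨i, hy, rfl, h⟩ | ⟨j, hx, rfl, h⟩)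
        · exact hclique _ (hcI i) _ (hcI j) (fun h => absurd (hinj h) hij.ne)
        · exact ((hadj y hy i).mpr (Or.inl h)).symm
        · exact (hadj x hx j).mpr (Or.inr h)
      rintro (h | h)
      · exact key a b h
      · exact (key b a h).symm
  · -- asymmetry
    rintro a b (⟨i, j, hij, rfl, rfl⟩ | ⟨i, hb, rfl, h⟩ | ⟨j, ha, rfl, h⟩) <;>
      rintro (⟨i', j', hij', he1, he2⟩ | ⟨i', hb', he, h'⟩ | ⟨j', ha', he, h'⟩)
    · have := hinj he1; have := hinj he2
      omega
    · exact hIC _ hb' _ rfl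
    · exact hIC _ ha' _ rfl
    · exact hIC _ hb _ he1
    · exact hIC _ hb _ he
    · have := hinj he
      have := hlt b hb
      omega
    · exact hIC _ ha _ he2
    · have := hinj he
      have := hlt a ha
      omega
    · exact hIC _ ha' _ rfl
  · -- transitivity
    rintro x y z (⟨i, j, hij, rfl, rfl⟩ | ⟨i, hy, rfl, h⟩ | ⟨j, hx, rfl, h⟩) <;>
      rintro (⟨i', j', hij', he1, he2⟩ | ⟨i', hz, he, h'⟩ | ⟨j', hy', he, h'⟩)
    · have hjj : j = i' := hinj he1
      exact Or.inl ⟨i, j', by omega, rfl, he2⟩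
    · have hji : j = i' := hinj he
      exact Or.inr (Or.inl ⟨i, hz, rfl, by omega⟩)
    · exact (hIC _ hy' _ rfl).elim
    · exact (hIC _ hy _ he1).elim
    · exact (hIC _ hy _ he).elim
    · -- y ∈ I, x = c i, i+1 ≤ lo y ; y ∈ I, z = c j', hi y ≤ j'+1
      have := hlt y hy
      exact Or.inl ⟨i, j', by omega, rfl, he⟩
    · have hjj : j = i' := hinj he1
      exact Or.inr (Or.inr ⟨j', hx, he2, by omega⟩)
    · -- x ∈ I, y = c j, hi x ≤ j+1 ; z ∈ I, y = c i', i'+1 ≤ lo z : contradiction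
      have hji : j = i' := hinj he
      have := hcross x hx z hz
      omega
    · exact (hIC _ hy' _ rfl).elim
end

section
/- Let G = (I ∪ C, E) be a split graph with maximal clique C of size k. Then G admits a transitive orientation if and only if the vertices of C can be labeled 1,…,k so that for all a, b ∈ I: (i) N(a) is of the form [1,m] ∪ [n,k] with m < n, or [1,r] with r < k, or [l,k] with l > 1; (ii) if N(a) = [1,r] and N(b) = [l,k] then r < l; (iii) if N(a) = [1,m] ∪ [n,k] and N(b) = [1,r] then r < n; (iv) if N(a) = [1,m] ∪ [n,k] and N(b) = [l,k] then m < l; (v) if N(a) = [1,m] ∪ [n,k] and N(b) = [1,m'] ∪ [n',k] then m < n' and m' < n. -/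
section Proofs

variable {V : Type*} {G : SimpleGraph V} {I C : Set V}

private lemma cmemC {k : ℕ} {c : Fin k → V} (hrange : Set.range c = C) (i : Fin k) :
    c i ∈ C := by rw [← hrange]; exact ⟨i, rfl⟩

private lemma cnotI (hdisj : Disjoint I C) {k : ℕ} {c : Fin k → V}
    (hrange : Set.range c = C) {i : Fin k} (h : c i ∈ I) : False :=
  Set.disjoint_left.mp hdisj h (cmemC hrange i)

/-- A `Form1` neighborhood is never all of the clique (by maximality), so `m + 1 < n`. -/
private lemma form1_gap (hmax : IsMaxCliquePartition G I C) {k : ℕ} {c : Fin k → V}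
    (hrange : Set.range c = C) {a : V} (ha : a ∈ I) {m n : ℕ}
    (h : Form1 G c a m n) : m + 1 < n := by
  obtain ⟨v, hv, hnadj⟩ := hmax a ha
  rw [← hrange] at hv; obtain ⟨i, rfl⟩ := hv
  have h2 := h.2.2.2 i
  have : ¬ (i.val + 1 ≤ m ∨ n ≤ i.val + 1) := fun hh => hnadj (h2.mpr hh)
  omega

private lemma backward_dir (hsplit : IsSplitPartition G I C)
    (hmax : IsMaxCliquePartition G I C) {k : ℕ} (c : Fin k → V)
    (hcinj : Function.Injective c) (hrange : Set.range c = C)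
    (hgood : GoodLabeling G I c) : ∃ D : V → V → Prop, IsTransitiveOrientation G D := by
  classical
  obtain ⟨hcov, hdisj, hI, hC⟩ := hsplit
  obtain ⟨h1, h2, h3, h4, h5⟩ := hgood
  have hmemV : ∀ v : V, v ∈ I ∨ v ∈ C := by
    intro v
    have : v ∈ I ∪ C := by rw [hcov]; trivial
    exact this
  set Low : V → Fin k → Prop :=
    (fun a i => G.Adj a (c i) ∧ ∃ j, i < j ∧ ¬ G.Adj a (c j)) with hLowdef
  set High : V → Fin k → Prop :=
    (fun a i => G.Adj a (c i) ∧ ∀ j, i < j → G.Adj a (c j)) with hHighdef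
  have hLowAdj : ∀ a i, Low a i → G.Adj a (c i) := fun a i h => h.1
  have hHighAdj : ∀ a i, High a i → G.Adj a (c i) := fun a i h => h.1
  have hnotboth : ∀ a i, Low a i → High a i → False := by
    rintro a i ⟨-, j, hij, hnadj⟩ ⟨-, hall⟩
    exact hnadj (hall j hij)
  have hlowhigh : ∀ a (i j : Fin k), Low a i → High a j → i < j := by
    intro a i j hL hH
    by_contra hnot
    push_neg at hnot
    obtain ⟨-, j', hij', hnadj⟩ := hL
    exact hnadj (hH.2 j' (lt_of_le_of_lt hnot hij'))
  have hhighup : ∀ a (i j : Fin k), i < j → High a i → High a j := by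
    intro a i j hij hH
    exact ⟨hH.2 j hij, fun j' hj' => hH.2 j' (lt_trans hij hj')⟩
  have hlowdown : ∀ a ∈ I, ∀ i j : Fin k, i < j → Low a j → Low a i := by
    intro a ha i j hij hL
    obtain ⟨hadjj, j', hjj', hnadj⟩ := hL
    have hijv : i.val < j.val := hij
    have hjjv : j.val < j'.val := hjj'
    rcases h1 a ha with ⟨m, n, hm1, hmn, hnk, hiff⟩ | ⟨r, hrk, hiff⟩ | ⟨l, hl1, hlk, hiff⟩
    · rcases (hiff j).mp hadjj with hjm | hjn
      · exact ⟨(hiff i).mpr (Or.inl (by omega)), j', lt_trans hij hjj', hnadj⟩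
      · exact absurd ((hiff j').mpr (Or.inr (by omega))) hnadj
    · have hjr := (hiff j).mp hadjj
      exact ⟨(hiff i).mpr (by omega), j', lt_trans hij hjj', hnadj⟩
    · have hjl := (hiff j).mp hadjj
      exact absurd ((hiff j').mpr (by omega)) hnadj
  -- key lemma: no I-vertex "above" position i while another one is "below" it
  have hkey : ∀ a ∈ I, ∀ b ∈ I, ∀ i : Fin k, High a i → Low b i → False := by
    intro a ha b hb i hH hL
    have hA : (∃ m n, Form1 G c a m n ∧ n ≤ i.val + 1) ∨
        (∃ l, Form3 G c a l ∧ l ≤ i.val + 1) := by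
      rcases h1 a ha with ⟨m, n, hf⟩ | ⟨r, hrk, hiff⟩ | ⟨l, hf⟩
      · obtain ⟨hm1, hmn, hnk, hiff⟩ := hf
        have hgap := form1_gap hmax hrange ha ⟨hm1, hmn, hnk, hiff⟩
        rcases (hiff i).mp hH.1 with him | hin
        · exfalso
          have hlt : i < (⟨m, by omega⟩ : Fin k) := Fin.lt_def.mpr (show i.val < m by omega)
          have hadm : m + 1 ≤ m ∨ n ≤ m + 1 :=
            (hiff ⟨m, by omega⟩).mp (hH.2 ⟨m, by omega⟩ hlt)
          omega
        · exact Or.inl ⟨m, n, ⟨hm1, hmn, hnk, hiff⟩, hin⟩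
      · exfalso
        have hir : i.val + 1 ≤ r := (hiff i).mp hH.1
        have hlt : i < (⟨r, hrk⟩ : Fin k) := Fin.lt_def.mpr (show i.val < r by omega)
        have : r + 1 ≤ r := (hiff ⟨r, hrk⟩).mp (hH.2 ⟨r, hrk⟩ hlt)
        omega
      · exact Or.inr ⟨l, hf, (hf.2.2 i).mp hH.1⟩
    have hB : (∃ m n, Form1 G c b m n ∧ i.val + 1 ≤ m) ∨
        (∃ r, Form2 G c b r ∧ i.val + 1 ≤ r) := by
      obtain ⟨hadji, j, hij, hnadj⟩ := hL
      have hijv : i.val < j.val := hij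
      rcases h1 b hb with ⟨m, n, hm1, hmn, hnk, hiff⟩ | ⟨r, hrk, hiff⟩ | ⟨l, hl1, hlk, hiff⟩
      · rcases (hiff i).mp hadji with him | hin
        · exact Or.inl ⟨m, n, ⟨hm1, hmn, hnk, hiff⟩, him⟩
        · exact absurd ((hiff j).mpr (Or.inr (by omega))) hnadj
      · exact Or.inr ⟨r, ⟨hrk, hiff⟩, (hiff i).mp hadji⟩
      · have := (hiff i).mp hadji
        exact absurd ((hiff j).mpr (by omega)) hnadj
    rcases hA with ⟨m, n, hfa, hn⟩ | ⟨l, hfa, hl⟩ <;>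
      rcases hB with ⟨m', n', hfb, hm'⟩ | ⟨r, hfb, hr⟩
    · have := (h5 a ha b hb m n m' n' hfa hfb).2
      omega
    · have := h3 a ha b hb m n r hfa hfb
      omega
    · have := h4 b hb a ha m' n' l hfb hfa
      omega
    · have := h2 b hb a ha r l hfb hfa
      omega
  refine ⟨fun x y => (∃ i j : Fin k, i < j ∧ x = c i ∧ y = c j) ∨
      (∃ i, x = c i ∧ y ∈ I ∧ Low y i) ∨ (∃ i, y = c i ∧ x ∈ I ∧ High x i), ⟨?_, ?_⟩, ?_⟩
  · -- adjacency iff one direction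
    intro x y
    constructor
    · intro hxy
      have hne : x ≠ y := hxy.ne
      rcases hmemV x with hx | hx <;> rcases hmemV y with hy | hy
      · exact absurd hxy (hI x hx y hy)
      · rw [← hrange] at hy; obtain ⟨i, rfl⟩ := hy
        by_cases hex : ∃ j, i < j ∧ ¬ G.Adj x (c j)
        · exact Or.inr (Or.inr (Or.inl ⟨i, rfl, hx, hxy, hex⟩))
        · push_neg at hex
          exact Or.inl (Or.inr (Or.inr ⟨i, rfl, hx, hxy, hex⟩))
      · rw [← hrange] at hx; obtain ⟨i, rfl⟩ := hx
        have hyx : G.Adj y (c i) := hxy.symm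
        by_cases hex : ∃ j, i < j ∧ ¬ G.Adj y (c j)
        · exact Or.inl (Or.inr (Or.inl ⟨i, rfl, hy, hyx, hex⟩))
        · push_neg at hex
          exact Or.inr (Or.inr (Or.inr ⟨i, rfl, hy, hyx, hex⟩))
      · rw [← hrange] at hx hy
        obtain ⟨i, rfl⟩ := hx; obtain ⟨j, rfl⟩ := hy
        have hij : i ≠ j := fun h => hne (congrArg c h)
        rcases lt_or_gt_of_ne hij with h | h
        · exact Or.inl (Or.inl ⟨i, j, h, rfl, rfl⟩)
        · exact Or.inr (Or.inl ⟨j, i, h, rfl, rfl⟩)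
    · have one : ∀ x y : V, ((∃ i j : Fin k, i < j ∧ x = c i ∧ y = c j) ∨
          (∃ i, x = c i ∧ y ∈ I ∧ Low y i) ∨ (∃ i, y = c i ∧ x ∈ I ∧ High x i)) →
          G.Adj x y := by
        rintro x y (⟨i, j, hij, rfl, rfl⟩ | ⟨i, rfl, hyI, hLy⟩ | ⟨i, rfl, hxI, hHx⟩)
        · exact hC (c i) (cmemC hrange i) (c j) (cmemC hrange j)
            (fun h => absurd (hcinj h) (ne_of_lt hij))
        · exact hLy.1.symm
        · exact hHx.1
      rintro (h | h)
      · exact one x y h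
      · exact (one y x h).symm
  · -- asymmetry
    rintro x y (⟨i, j, hij, rfl, rfl⟩ | ⟨i, rfl, hyI, hLy⟩ | ⟨i, rfl, hxI, hHx⟩)
        (⟨i', j', hij', e1, e2⟩ | ⟨i', e1, hyI', hLy'⟩ | ⟨i', e1, hxI', hHx'⟩)
    · have v1 : j.val = i'.val := congrArg Fin.val (hcinj e1)
      have v2 : i.val = j'.val := congrArg Fin.val (hcinj e2)
      have v3 : i.val < j.val := hij
      have v4 : i'.val < j'.val := hij'
      omega
    · exact cnotI hdisj hrange hyI'
    · exact cnotI hdisj hrange hxI'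
    · exact cnotI hdisj hrange (e1 ▸ hyI)
    · exact cnotI hdisj hrange hyI'
    · have : i = i' := hcinj e1
      exact hnotboth y i hLy (this ▸ hHx')
    · exact cnotI hdisj hrange (e2 ▸ hxI)
    · have : i = i' := hcinj e1
      exact hnotboth x i (this ▸ hLy') hHx
    · exact cnotI hdisj hrange hxI'
  · -- transitivity
    rintro x y z (⟨i, j, hij, rfl, rfl⟩ | ⟨i, rfl, hyI, hLy⟩ | ⟨i, rfl, hxI, hHx⟩)
        hD2
    · rcases hD2 with ⟨i', j', hij', e1, e2⟩ | ⟨i', e1, hzI, hLz⟩ | ⟨i', e1, hyI', hHy⟩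
      · have hji' : j = i' := hcinj e1
        exact Or.inl ⟨i, j', lt_trans hij (hji' ▸ hij'), rfl, e2⟩
      · have hji' : j = i' := hcinj e1
        exact Or.inr (Or.inl ⟨i, rfl, hzI, hlowdown z hzI i j hij (hji' ▸ hLz)⟩)
      · exact (cnotI hdisj hrange hyI').elim
    · rcases hD2 with ⟨i', j', hij', e1, e2⟩ | ⟨i', e1, hzI, hLz⟩ | ⟨i', e1, hyI', hHy⟩
      · exact absurd (e1 ▸ hyI) (fun h => cnotI hdisj hrange h)
      · exact absurd (e1 ▸ hyI) (fun h => cnotI hdisj hrange h)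
      · have hii' : i < i' := hlowhigh y i i' hLy hHy
        exact Or.inl ⟨i, i', hii', rfl, e1⟩
    · rcases hD2 with ⟨i', j', hij', e1, e2⟩ | ⟨i', e1, hzI, hLz⟩ | ⟨i', e1, hyI', hHy⟩
      · have hii' : i = i' := hcinj e1
        exact Or.inr (Or.inr ⟨j', e2, hxI, hhighup x i j' (hii' ▸ hij') hHx⟩)
      · have hii' : i = i' := hcinj e1
        exact absurd (hkey x hxI z hzI i hHx (hii' ▸ hLz)) (fun h => h.elim)
      · exact (cnotI hdisj hrange hyI').elim

private lemma forward_dir [Fintype V] (hsplit : IsSplitPartition G I C)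
    (hmax : IsMaxCliquePartition G I C) {k : ℕ} (hk : C.ncard = k)
    {D : V → V → Prop} (hD : IsTransitiveOrientation G D) :
    ∃ c : Fin k → V, Function.Injective c ∧ Set.range c = C ∧ GoodLabeling G I c := by
  classical
  obtain ⟨⟨hadj, hasym⟩, htr⟩ := hD
  obtain ⟨hcov, hdisj, hI, hC⟩ := hsplit
  have hirr : ∀ v, ¬ D v v := fun v h => hasym v v h h
  set Cf := (Set.toFinite C).toFinset with hCfdef
  have hmemCf : ∀ v, v ∈ Cf ↔ v ∈ C := fun v => Set.Finite.mem_toFinset _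
  have hcard : Cf.card = k := by
    rw [← hk]; exact (Set.ncard_eq_toFinset_card C (Set.toFinite C)).symm
  set rank : V → ℕ := fun v => (Cf.filter (fun u => D u v)).card with hrankdef
  have hrmono : ∀ u ∈ Cf, ∀ v, D u v → rank u < rank v := by
    intro u hu v huv
    have hsub : insert u (Cf.filter (fun w => D w u)) ⊆ Cf.filter (fun w => D w v) := by
      intro w hw
      rcases Finset.mem_insert.mp hw with rfl | hw
      · exact Finset.mem_filter.mpr ⟨hu, huv⟩
      · obtain ⟨hw1, hw2⟩ := Finset.mem_filter.mp hw
        exact Finset.mem_filter.mpr ⟨hw1, htr _ _ _ hw2 huv⟩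
    have hnot : u ∉ Cf.filter (fun w => D w u) := fun h => hirr u (Finset.mem_filter.mp h).2
    have h1 := Finset.card_insert_of_notMem hnot
    have h2 := Finset.card_le_card hsub
    simp only [hrankdef]
    omega
  have hDor : ∀ u ∈ Cf, ∀ v ∈ Cf, u ≠ v → D u v ∨ D v u := fun u hu v hv hne =>
    (hadj u v).mp (hC u ((hmemCf u).mp hu) v ((hmemCf v).mp hv) hne)
  have hrlt : ∀ v ∈ Cf, rank v < k := by
    intro v hv
    have hss : Cf.filter (fun u => D u v) ⊂ Cf :=
      Finset.filter_ssubset.mpr ⟨v, hv, hirr v⟩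
    have := Finset.card_lt_card hss
    simp only [hrankdef]
    omega
  set f : {x // x ∈ Cf} → Fin k := fun v => ⟨rank v.1, hrlt v.1 v.2⟩ with hfdef
  have hfinj : Function.Injective f := by
    rintro ⟨u, hu⟩ ⟨v, hv⟩ h
    have hr : rank u = rank v := congrArg Fin.val h
    by_contra hne
    have hne' : u ≠ v := fun h' => hne (Subtype.ext h')
    rcases hDor u hu v hv hne' with h' | h'
    · exact absurd hr (by have := hrmono u hu v h'; omega)
    · exact absurd hr (by have := hrmono v hv u h'; omega)
  have hcardeq : Fintype.card {x // x ∈ Cf} = Fintype.card (Fin k) := by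
    simp [Fintype.card_coe, hcard]
  have hfbij : Function.Bijective f :=
    (Fintype.bijective_iff_injective_and_card f).mpr ⟨hfinj, hcardeq⟩
  set e := Equiv.ofBijective f hfbij with hedef
  set c : Fin k → V := fun i => (e.symm i).1 with hcdef
  have hcinj : Function.Injective c := fun i j h =>
    e.symm.injective (Subtype.ext h)
  have hcmemf : ∀ i, c i ∈ Cf := fun i => (e.symm i).2
  have hrange : Set.range c = C := by
    ext v
    constructor
    · rintro ⟨i, rfl⟩; exact (hmemCf _).mp (hcmemf i)
    · intro hv
      exact ⟨e ⟨v, (hmemCf v).mpr hv⟩, by simp [hcdef]⟩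
  have hrankc : ∀ i : Fin k, rank (c i) = i.val := by
    intro i
    have : f (e.symm i) = i := e.apply_symm_apply i
    exact congrArg Fin.val this
  have hcmono : ∀ i j : Fin k, i < j → D (c i) (c j) := by
    intro i j hij
    have hijv : i.val < j.val := hij
    have hne : c i ≠ c j := fun h => absurd (congrArg Fin.val (hcinj h)) (by omega)
    rcases hDor _ (hcmemf i) _ (hcmemf j) hne with h | h
    · exact h
    · exfalso
      have := hrmono _ (hcmemf j) _ h
      rw [hrankc, hrankc] at this
      omega
  have hadjc : ∀ (a : V) (i : Fin k), G.Adj a (c i) ↔ (D (c i) a ∨ D a (c i)) := by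
    intro a i
    rw [G.adj_comm]
    exact hadj (c i) a
  have dlow : ∀ (a : V) (i j : Fin k), G.Adj a (c i) → i < j → ¬ G.Adj a (c j) →
      D (c i) a := by
    intro a i j hai hij hnadj
    rcases (hadjc a i).mp hai with h | h
    · exact h
    · exact absurd ((hadjc a j).mpr (Or.inr (htr _ _ _ h (hcmono i j hij)))) hnadj
  have dhigh : ∀ (a : V) (i j : Fin k), G.Adj a (c i) → j < i → ¬ G.Adj a (c j) →
      D a (c i) := by
    intro a i j hai hji hnadj
    rcases (hadjc a i).mp hai with h | h
    · exact absurd ((hadjc a j).mpr (Or.inl (htr _ _ _ (hcmono j i hji) h))) hnadj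
    · exact h
  have hIns : ∀ a ∈ I, ∀ b ∈ I, ¬ D a b := fun a ha b hb h =>
    hI a ha b hb ((hadj a b).mpr (Or.inl h))
  refine ⟨c, hcinj, hrange, ?_, ?_, ?_, ?_, ?_⟩
  · -- each I-vertex has one of the three forms
    intro a ha
    set L := Finset.univ.filter (fun i : Fin k => D (c i) a) with hLdef
    set U := Finset.univ.filter (fun i : Fin k => D a (c i)) with hUdef
    have hmemL : ∀ i, i ∈ L ↔ D (c i) a := by intro i; simp [hLdef]
    have hmemU : ∀ i, i ∈ U ↔ D a (c i) := by intro i; simp [hUdef]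
    have hLU : ∀ i, G.Adj a (c i) ↔ (i ∈ L ∨ i ∈ U) := by
      intro i; rw [hadjc, hmemL, hmemU]
    have hLdown : ∀ i ∈ L, ∀ j, j ≤ i → j ∈ L := by
      intro i hi j hj
      rcases lt_or_eq_of_le hj with h | h
      · exact (hmemL j).mpr (htr _ _ _ (hcmono j i h) ((hmemL i).mp hi))
      · exact h ▸ hi
    have hUup : ∀ i ∈ U, ∀ j, i ≤ j → j ∈ U := by
      intro i hi j hj
      rcases lt_or_eq_of_le hj with h | h
      · exact (hmemU j).mpr (htr _ _ _ ((hmemU i).mp hi) (hcmono i j h))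
      · exact h ▸ hi
    have hLUlt : ∀ i ∈ L, ∀ j ∈ U, i < j := by
      intro i hi j hj
      by_contra hnot
      push_neg at hnot
      rcases lt_or_eq_of_le hnot with h | h
      · exact hasym _ _ (htr _ _ _ ((hmemU j).mp hj) (hcmono j i h)) ((hmemL i).mp hi)
      · exact hasym _ _ ((hmemL i).mp hi) (h ▸ (hmemU j).mp hj)
    obtain ⟨v, hvC, hvn⟩ := hmax a ha
    rw [← hrange] at hvC; obtain ⟨i0, rfl⟩ := hvC
    have hi0 : i0 ∉ L ∧ i0 ∉ U := by
      constructor <;> intro h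
      · exact hvn ((hLU i0).mpr (Or.inl h))
      · exact hvn ((hLU i0).mpr (Or.inr h))
    by_cases hLne : L.Nonempty <;> by_cases hUne : U.Nonempty
    · left
      refine ⟨(L.max' hLne).val + 1, (U.min' hUne).val + 1, by omega, ?_, ?_, ?_⟩
      · have := hLUlt _ (L.max'_mem hLne) _ (U.min'_mem hUne)
        have : (L.max' hLne).val < (U.min' hUne).val := this
        omega
      · have := (U.min' hUne).isLt
        omega
      · intro i
        rw [hLU]
        constructor
        · rintro (h | h)
          · have := L.le_max' i h
            have : i.val ≤ (L.max' hLne).val := this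
            omega
          · have := U.min'_le i h
            have : (U.min' hUne).val ≤ i.val := this
            omega
        · rintro (h | h)
          · exact Or.inl (hLdown _ (L.max'_mem hLne) i (by rw [Fin.le_def]; omega))
          · exact Or.inr (hUup _ (U.min'_mem hUne) i (by rw [Fin.le_def]; omega))
    · right; left
      refine ⟨(L.max' hLne).val + 1, ?_, ?_⟩
      · have hmi0 : (L.max' hLne) < i0 := by
          by_contra hnot
          push_neg at hnot
          exact hi0.1 (hLdown _ (L.max'_mem hLne) i0 hnot)
        have : (L.max' hLne).val < i0.val := hmi0
        have := i0.isLt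
        omega
      · intro i
        rw [hLU]
        constructor
        · rintro (h | h)
          · have : i.val ≤ (L.max' hLne).val := L.le_max' i h
            omega
          · exact absurd ⟨i, h⟩ hUne
        · intro h
          exact Or.inl (hLdown _ (L.max'_mem hLne) i (by rw [Fin.le_def]; omega))
    · right; right
      refine ⟨(U.min' hUne).val + 1, ?_, ?_, ?_⟩
      · have hmi0 : i0 < U.min' hUne := by
          by_contra hnot
          push_neg at hnot
          exact hi0.2 (hUup _ (U.min'_mem hUne) i0 hnot)
        have : i0.val < (U.min' hUne).val := hmi0
        omega
      · have := (U.min' hUne).isLt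
        omega
      · intro i
        rw [hLU]
        constructor
        · rintro (h | h)
          · exact absurd ⟨i, h⟩ hLne
          · have : (U.min' hUne).val ≤ i.val := U.min'_le i h
            omega
        · intro h
          exact Or.inr (hUup _ (U.min'_mem hUne) i (by rw [Fin.le_def]; omega))
    · right; left
      refine ⟨0, Nat.pos_of_ne_zero (fun h => (h ▸ i0).elim0), ?_⟩
      intro i
      rw [hLU]
      constructor
      · rintro (h | h)
        · exact absurd ⟨i, h⟩ hLne
        · exact absurd ⟨i, h⟩ hUne
      · omega
  · -- (ii)
    intro a ha b hb r l hfa hfb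
    by_contra hrl
    push_neg at hrl
    obtain ⟨hrk, hiffa⟩ := hfa
    obtain ⟨hl1, hlk, hiffb⟩ := hfb
    set i : Fin k := ⟨l - 1, by omega⟩ with hidef
    have hai : G.Adj a (c i) := (hiffa i).mpr (by show l - 1 + 1 ≤ r; omega)
    have hna : ¬ G.Adj a (c ⟨r, hrk⟩) := fun h => by
      have : r + 1 ≤ r := (hiffa ⟨r, hrk⟩).mp h; omega
    have hDa : D (c i) a := dlow a i ⟨r, hrk⟩ hai (Fin.lt_def.mpr (by show l - 1 < r; omega)) hna
    have hbi : G.Adj b (c i) := (hiffb i).mpr (by show l ≤ l - 1 + 1; omega)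
    have hnb : ¬ G.Adj b (c ⟨0, by omega⟩) := fun h => by
      have : l ≤ 0 + 1 := (hiffb ⟨0, by omega⟩).mp h; omega
    have hDb : D b (c i) := dhigh b i ⟨0, by omega⟩ hbi (Fin.lt_def.mpr (by show 0 < l - 1; omega)) hnb
    exact hIns b hb a ha (htr _ _ _ hDb hDa)
  · -- (iii)
    intro a ha b hb m n r hfa hfb
    by_contra hnr
    push_neg at hnr
    have hgap := form1_gap hmax hrange ha hfa
    obtain ⟨hm1, hmn, hnk, hiffa⟩ := hfa
    obtain ⟨hrk, hiffb⟩ := hfb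
    set i : Fin k := ⟨n - 1, by omega⟩ with hidef
    have hai : G.Adj a (c i) := (hiffa i).mpr (Or.inr (by show n ≤ n - 1 + 1; omega))
    have hna : ¬ G.Adj a (c ⟨m, by omega⟩) := fun h => by
      have : m + 1 ≤ m ∨ n ≤ m + 1 := (hiffa ⟨m, by omega⟩).mp h; omega
    have hDa : D a (c i) := dhigh a i ⟨m, by omega⟩ hai (Fin.lt_def.mpr (by show m < n - 1; omega)) hna
    have hbi : G.Adj b (c i) := (hiffb i).mpr (by show n - 1 + 1 ≤ r; omega)
    have hnb : ¬ G.Adj b (c ⟨r, hrk⟩) := fun h => by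
      have : r + 1 ≤ r := (hiffb ⟨r, hrk⟩).mp h; omega
    have hDb : D (c i) b := dlow b i ⟨r, hrk⟩ hbi (Fin.lt_def.mpr (by show n - 1 < r; omega)) hnb
    exact hIns a ha b hb (htr _ _ _ hDa hDb)
  · -- (iv)
    intro a ha b hb m n l hfa hfb
    by_contra hml
    push_neg at hml
    have hgap := form1_gap hmax hrange ha hfa
    obtain ⟨hm1, hmn, hnk, hiffa⟩ := hfa
    obtain ⟨hl1, hlk, hiffb⟩ := hfb
    set i : Fin k := ⟨m - 1, by omega⟩ with hidef
    have hai : G.Adj a (c i) := (hiffa i).mpr (Or.inl (by show m - 1 + 1 ≤ m; omega))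
    have hna : ¬ G.Adj a (c ⟨m, by omega⟩) := fun h => by
      have : m + 1 ≤ m ∨ n ≤ m + 1 := (hiffa ⟨m, by omega⟩).mp h; omega
    have hDa : D (c i) a := dlow a i ⟨m, by omega⟩ hai (Fin.lt_def.mpr (by show m - 1 < m; omega)) hna
    have hbi : G.Adj b (c i) := (hiffb i).mpr (by show l ≤ m - 1 + 1; omega)
    have hnb : ¬ G.Adj b (c ⟨0, by omega⟩) := fun h => by
      have : l ≤ 0 + 1 := (hiffb ⟨0, by omega⟩).mp h; omega
    have hDb : D b (c i) := dhigh b i ⟨0, by omega⟩ hbi (Fin.lt_def.mpr (by show 0 < m - 1; omega)) hnb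
    exact hIns b hb a ha (htr _ _ _ hDb hDa)
  · -- (v)
    have main : ∀ a ∈ I, ∀ b ∈ I, ∀ m n m' n', Form1 G c a m n → Form1 G c b m' n' →
        m < n' := by
      intro a ha b hb m n m' n' hfa hfb
      by_contra hmn'
      push_neg at hmn'
      have hgapa := form1_gap hmax hrange ha hfa
      have hgapb := form1_gap hmax hrange hb hfb
      obtain ⟨hm1, hmn, hnk, hiffa⟩ := hfa
      obtain ⟨hm1', hmn', hnk', hiffb⟩ := hfb
      set i : Fin k := ⟨n' - 1, by omega⟩ with hidef
      have hai : G.Adj a (c i) := (hiffa i).mpr (Or.inl (by show n' - 1 + 1 ≤ m; omega))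
      have hna : ¬ G.Adj a (c ⟨m, by omega⟩) := fun h => by
        have : m + 1 ≤ m ∨ n ≤ m + 1 := (hiffa ⟨m, by omega⟩).mp h; omega
      have hDa : D (c i) a := dlow a i ⟨m, by omega⟩ hai
        (Fin.lt_def.mpr (by show n' - 1 < m; omega)) hna
      have hbi : G.Adj b (c i) := (hiffb i).mpr (Or.inr (by show n' ≤ n' - 1 + 1; omega))
      have hnb : ¬ G.Adj b (c ⟨m', by omega⟩) := fun h => by
        have : m' + 1 ≤ m' ∨ n' ≤ m' + 1 := (hiffb ⟨m', by omega⟩).mp h; omega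
      have hDb : D b (c i) := dhigh b i ⟨m', by omega⟩ hbi
        (Fin.lt_def.mpr (by show m' < n' - 1; omega)) hnb
      exact hIns b hb a ha (htr _ _ _ hDb hDa)
    intro a ha b hb m n m' n' hfa hfb
    exact ⟨main a ha b hb m n m' n' hfa hfb, main b hb a ha m' n' m n hfb hfa⟩

end Proofs


theorem stmt5 {V : Type*} [Fintype V] (G : SimpleGraph V) (I C : Set V)
    (hsplit : IsSplitPartition G I C) (hmax : IsMaxCliquePartition G I C)
    (k : ℕ) (hk : C.ncard = k) :
    (∃ D : V → V → Prop, IsTransitiveOrientation G D) ↔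
      ∃ c : Fin k → V, Function.Injective c ∧ Set.range c = C ∧ GoodLabeling G I c := by
  
  constructor
  · rintro ⟨D, hD⟩
    exact forward_dir hsplit hmax hk hD
  · rintro ⟨c, h1, h2, h3⟩
    exact backward_dir hsplit hmax c h1 h2 h3
end

section
/- In the orientation D of a labeled split graph G = (I ∪ C, E) defined by: i → j for clique labels i < j; for a ∈ I with N(a) = [1,m] ∪ [n,k], orient i → a for i ≤ m and a → j for j ≥ n; vertices a with N(a) = [1,r] are sinks; vertices a with N(a) = [l,k] are sources — if the labeling satisfies properties (i)–(v) of the characterization, then no directed 2-path a → b → c with a ∈ I a source-type vertex (N(a) = [l,k], l > 1) violates transitivity; i.e., for every such a and every directed path a → b → c, the edge a → c is also in D. -/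
theorem stmt6 {V : Type*} (G : SimpleGraph V) (I C : Set V)
    (hsplit : IsSplitPartition G I C) (hmax : IsMaxCliquePartition G I C)
    (k : ℕ) (c : Fin k → V) (hinj : Function.Injective c) (hrange : Set.range c = C)
    (hgood : GoodLabeling G I c)
    (D : V → V → Prop) (hor : IsOrientation G D)
    (hDC : ∀ i j : Fin k, D (c i) (c j) ↔ i < j)
    (hD1 : ∀ a ∈ I, ∀ m n, Form1 G c a m n →
      (∀ i : Fin k, D (c i) a ↔ i.val + 1 ≤ m) ∧ (∀ i : Fin k, D a (c i) ↔ n ≤ i.val + 1))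
    (hD2 : ∀ a ∈ I, ∀ r, Form2 G c a r →
      (∀ i : Fin k, D (c i) a ↔ G.Adj a (c i)) ∧ (∀ i : Fin k, ¬ D a (c i)))
    (hD3 : ∀ a ∈ I, ∀ l, Form3 G c a l →
      (∀ i : Fin k, D a (c i) ↔ G.Adj a (c i)) ∧ (∀ i : Fin k, ¬ D (c i) a))
    (hDI : ∀ a ∈ I, ∀ b ∈ I, ¬ D a b) :
    ∀ a ∈ I, ∀ l, Form3 G c a l → ∀ x y, D a x → D x y → D a y := by
  intro a ha l hF3 x y hax hxy
  -- x is adjacent to a, hence x ∈ C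
  have hadj_ax : G.Adj a x := (hor.1 a x).2 (Or.inl hax)
  have hxC : x ∈ C := by
    have hx : x ∈ I ∪ C := by rw [hsplit.1]; trivial
    rcases hx with hxI | hxC
    · exact absurd hadj_ax (hsplit.2.2.1 a ha x hxI)
    · exact hxC
  obtain ⟨i, rfl⟩ : ∃ i, c i = x := by rwa [← hrange] at hxC
  have hDa := hD3 a ha l hF3
  have hli : l ≤ i.val + 1 := (hF3.2.2 i).1 ((hDa.1 i).1 hax)
  -- case on y
  have hy : y ∈ I ∪ C := by rw [hsplit.1]; trivial
  rcases hy with hyI | hyC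
  · -- y ∈ I : derive contradiction
    exfalso
    rcases hgood.1 y hyI with ⟨m, n, hF1⟩ | ⟨r, hF2⟩ | ⟨l', hF3'⟩
    · have him : i.val + 1 ≤ m := ((hD1 y hyI m n hF1).1 i).1 hxy
      have : m < l := hgood.2.2.2.1 y hyI a ha m n l hF1 hF3
      omega
    · have hadj : G.Adj y (c i) := ((hD2 y hyI r hF2).1 i).1 hxy
      have hir : i.val + 1 ≤ r := (hF2.2 i).1 hadj
      have : r < l := hgood.2.1 y hyI a ha r l hF2 hF3
      omega
    · exact (hD3 y hyI l' hF3').2 i hxy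
  · -- y ∈ C
    obtain ⟨j, rfl⟩ : ∃ j, c j = y := by rwa [← hrange] at hyC
    have hij : i < j := (hDC i j).1 hxy
    have : l ≤ j.val + 1 := by
      have : (i:ℕ) < j := hij
      omega
    exact (hDa.1 j).2 ((hF3.2.2 j).2 this)
end

section
/- Every split comparability graph G satisfies ℛᵖ(G) ≤ 3; that is, there exist three permutations p₁, p₂, p₃ of the vertex set of G such that for all vertices a ≠ b, a and b are adjacent in G if and only if a and b occur in the same relative order in all three permutations (equivalently, the concatenated word p₁p₂p₃ represents G). -/
section Aux

variable {V : Type*}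


lemma pair_list [DecidableEq V] (a b : V) (l : List V) (hnd : l.Nodup)
    (hmem : ∀ x ∈ l, x = a ∨ x = b) (ha : a ∈ l) (hb : b ∈ l) (hab : a ≠ b) :
    l = [a, b] ∨ l = [b, a] := by
  match l with
  | [] => simp at ha
  | [x] =>
    simp only [List.mem_singleton] at ha hb
    exact absurd (ha ▸ hb) hab.symm
  | [x, y] =>
    have hx := hmem x (by simp)
    have hy := hmem y (by simp)
    have hxy : x ≠ y := by simp at hnd; tauto
    rcases hx with rfl | rfl <;> rcases hy with rfl | rfl <;> simp_all
  | x :: y :: z :: t =>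
    have hx := hmem x (by simp)
    have hy := hmem y (by simp)
    have hz := hmem z (by simp)
    simp only [List.nodup_cons, List.mem_cons] at hnd
    rcases hx with rfl | rfl <;> rcases hy with rfl | rfl <;> rcases hz with rfl | rfl <;> tauto

lemma sorted_perm {L : Type*} [Fintype V] [DecidableEq V] [LinearOrder L]
    (κ : V → L) (hinj : Function.Injective κ) :
    ∃ p : List V, (p.Nodup ∧ ∀ v : V, v ∈ p) ∧
      ∀ a b : V, a ≠ b →
        ((p.filter (fun x => decide (x = a ∨ x = b)) = [a, b] ∨
          p.filter (fun x => decide (x = a ∨ x = b)) = [b, a]) ∧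
         (κ a < κ b ↔ p.filter (fun x => decide (x = a ∨ x = b)) = [a, b])) := by
  classical
  let r : V → V → Prop := fun v w => κ v ≤ κ w
  haveI : DecidableRel r := fun _ _ => inferInstanceAs (Decidable (_ ≤ _))
  haveI : IsTrans V r := ⟨fun _ _ _ h h' => le_trans h h'⟩
  haveI : IsAntisymm V r := ⟨fun _ _ h h' => hinj (le_antisymm h h')⟩
  haveI : IsTotal V r := ⟨fun _ _ => le_total _ _⟩
  refine ⟨Finset.univ.sort r, ⟨Finset.sort_nodup (s := Finset.univ) (r := r), fun v => by simp [Finset.mem_sort]⟩, ?_⟩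
  intro a b hab
  set f := (Finset.univ.sort r).filter (fun x => decide (x = a ∨ x = b)) with hf
  have hnd : f.Nodup := (Finset.sort_nodup (s := Finset.univ) (r := r)).filter _
  have hmem : ∀ x ∈ f, x = a ∨ x = b := by
    intro x hx
    have := List.of_mem_filter hx
    simpa using this
  have hamem : a ∈ f := by
    rw [hf, List.mem_filter]
    simp [Finset.mem_sort]
  have hbmem : b ∈ f := by
    rw [hf, List.mem_filter]
    simp [Finset.mem_sort]
  have hopt := pair_list a b f hnd hmem hamem hbmem hab
  have hpw : f.Pairwise r := (Finset.pairwise_sort (s := Finset.univ) (r := r)).filter _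
  refine ⟨hopt, ?_⟩
  constructor
  · intro hlt
    rcases hopt with h | h
    · exact h
    · exfalso
      rw [h] at hpw
      have : r b a := by simpa using hpw
      exact absurd hlt (not_lt.2 this)
  · intro h
    rw [h] at hpw
    have hle : κ a ≤ κ b := by simpa using hpw
    exact lt_of_le_of_ne hle (fun he => hab (hinj he))

lemma lex3_lt (x y z x' y' z' : ℕ) :
    (toLex (x, toLex (y, z)) < toLex (x', toLex (y', z'))) ↔
      (x < x' ∨ (x = x' ∧ (y < y' ∨ (y = y' ∧ z < z')))) := by
  simp [Prod.Lex.lt_iff]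

lemma lex3_eq (x y z x' y' z' : ℕ) :
    (toLex (x, toLex (y, z)) = toLex (x', toLex (y', z'))) ↔ (x = x' ∧ y = y' ∧ z = z') := by
  simp [Prod.ext_iff]

open Classical in
noncomputable def key1 {V : Type*} (inC : V → Prop) (m s ι : V → ℕ) (v : V) :
    Lex (ℕ × Lex (ℕ × ℕ)) :=
  if inC v then toLex (2 * m v + 1, toLex (0, ι v)) else toLex (2 * m v, toLex (s v, ι v))

open Classical in
noncomputable def key2 {V : Type*} (inC : V → Prop) (m s ι : V → ℕ) (k N : ℕ) (v : V) :
    Lex (ℕ × Lex (ℕ × ℕ)) :=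
  if inC v then toLex (2 * m v + 1, toLex (0, ι v))
  else toLex (2 * (k - s v), toLex (k - m v, N - ι v))

open Classical in
noncomputable def key3 {V : Type*} (inC : V → Prop) (m ι : V → ℕ) (k g : ℕ) (v : V) :
    Lex (ℕ × Lex (ℕ × ℕ)) :=
  if inC v then toLex (2 * m v + 1, toLex (0, ι v)) else toLex (2 * g, toLex (k - m v, ι v))

section keylemmas
variable {V : Type*} {inC : V → Prop} {m s ι : V → ℕ} {k N g : ℕ} {v : V}

lemma key1_pos (h : inC v) : key1 inC m s ι v = toLex (2 * m v + 1, toLex (0, ι v)) := by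
  simp [key1, h]
lemma key1_neg (h : ¬ inC v) : key1 inC m s ι v = toLex (2 * m v, toLex (s v, ι v)) := by
  simp [key1, h]
lemma key2_pos (h : inC v) : key2 inC m s ι k N v = toLex (2 * m v + 1, toLex (0, ι v)) := by
  simp [key2, h]
lemma key2_neg (h : ¬ inC v) :
    key2 inC m s ι k N v = toLex (2 * (k - s v), toLex (k - m v, N - ι v)) := by
  simp [key2, h]
lemma key3_pos (h : inC v) : key3 inC m ι k g v = toLex (2 * m v + 1, toLex (0, ι v)) := by
  simp [key3, h]
lemma key3_neg (h : ¬ inC v) : key3 inC m ι k g v = toLex (2 * g, toLex (k - m v, ι v)) := by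
  simp [key3, h]

end keylemmas

lemma keys_good {V : Type*} (G : SimpleGraph V) (inC : V → Prop)
    (m s ι : V → ℕ) (k N g : ℕ)
    (hιinj : ∀ u v : V, ι u = ι v → u = v)
    (hιlt : ∀ v, ι v < N)
    (hms : ∀ v, m v + s v ≤ k)
    (hCC : ∀ a b, inC a → inC b → a ≠ b → G.Adj a b)
    (hII : ∀ a b, ¬ inC a → ¬ inC b → ¬ G.Adj a b)
    (hCI : ∀ c a, inC c → ¬ inC a → (G.Adj c a ↔ (m c < m a ∨ k - s a ≤ m c)))
    (hma : ∀ a, ¬ inC a → m a ≤ g)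
    (hga : ∀ a, ¬ inC a → g + s a ≤ k)
    (hIIk : ∀ a b, ¬ inC a → ¬ inC b → m b + s a ≤ k) :
    ∃ κ₁ κ₂ κ₃ : V → Lex (ℕ × Lex (ℕ × ℕ)),
      Function.Injective κ₁ ∧ Function.Injective κ₂ ∧ Function.Injective κ₃ ∧
      ∀ a b : V, a ≠ b →
        (G.Adj a b ↔ ((κ₁ a < κ₁ b ∧ κ₂ a < κ₂ b ∧ κ₃ a < κ₃ b) ∨
                      (κ₁ b < κ₁ a ∧ κ₂ b < κ₂ a ∧ κ₃ b < κ₃ a))) := by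
  classical
  refine ⟨key1 inC m s ι, key2 inC m s ι k N, key3 inC m ι k g, ?_, ?_, ?_, ?_⟩
  · intro u v h
    by_cases hu : inC u <;> by_cases hv : inC v <;>
      [rw [key1_pos hu, key1_pos hv, lex3_eq] at h;
       rw [key1_pos hu, key1_neg hv, lex3_eq] at h;
       rw [key1_neg hu, key1_pos hv, lex3_eq] at h;
       rw [key1_neg hu, key1_neg hv, lex3_eq] at h] <;>
      first
        | exact hιinj u v h.2.2
        | omega
  · intro u v h
    by_cases hu : inC u <;> by_cases hv : inC v <;>
      [rw [key2_pos hu, key2_pos hv, lex3_eq] at h;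
       rw [key2_pos hu, key2_neg hv, lex3_eq] at h;
       rw [key2_neg hu, key2_pos hv, lex3_eq] at h;
       rw [key2_neg hu, key2_neg hv, lex3_eq] at h]
    · exact hιinj u v h.2.2
    · omega
    · omega
    · refine hιinj u v ?_
      have h1 := hιlt u; have h2 := hιlt v
      omega
  · intro u v h
    by_cases hu : inC u <;> by_cases hv : inC v <;>
      [rw [key3_pos hu, key3_pos hv, lex3_eq] at h;
       rw [key3_pos hu, key3_neg hv, lex3_eq] at h;
       rw [key3_neg hu, key3_pos hv, lex3_eq] at h;
       rw [key3_neg hu, key3_neg hv, lex3_eq] at h] <;>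
      first
        | exact hιinj u v h.2.2
        | omega
  · intro a b hab
    have hι : ι a ≠ ι b := fun h => hab (hιinj a b h)
    by_cases hac : inC a <;> by_cases hbc : inC b
    · refine iff_of_true (hCC a b hac hbc hab) ?_
      rw [key1_pos hac, key1_pos hbc, key2_pos hac, key2_pos hbc, key3_pos hac, key3_pos hbc]
      simp only [lex3_lt, true_and, and_true]
      omega
    · rw [hCI a b hac hbc,
        key1_pos hac, key1_neg hbc, key2_pos hac, key2_neg hbc, key3_pos hac, key3_neg hbc]
      simp only [lex3_lt, true_and, and_true]
      have h1 := hms b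
      have h2 := hma b hbc
      have h3 := hga b hbc
      omega
    · rw [G.adj_comm, hCI b a hbc hac,
        key1_neg hac, key1_pos hbc, key2_neg hac, key2_pos hbc, key3_neg hac, key3_pos hbc]
      simp only [lex3_lt, true_and, and_true]
      have h1 := hms a
      have h2 := hma a hac
      have h3 := hga a hac
      omega
    · refine iff_of_false (hII a b hac hbc) ?_
      rw [key1_neg hac, key1_neg hbc, key2_neg hac, key2_neg hbc, key3_neg hac, key3_neg hbc]
      simp only [lex3_lt, true_and, and_true]
      have h1 := hms a; have h2 := hms b
      have h3 := hIIk a b hac hbc; have h4 := hIIk b a hbc hac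
      have h5 := hma a hac; have h6 := hma b hbc
      have h7 := hga a hac; have h8 := hga b hbc
      have h9 := hιlt a; have h10 := hιlt b
      omega

lemma key_represents {L : Type*} [Fintype V] [DecidableEq V] [LinearOrder L]
    (G : SimpleGraph V) (κ₁ κ₂ κ₃ : V → L)
    (h₁ : Function.Injective κ₁) (h₂ : Function.Injective κ₂) (h₃ : Function.Injective κ₃)
    (hadj : ∀ a b : V, a ≠ b →
      (G.Adj a b ↔ ((κ₁ a < κ₁ b ∧ κ₂ a < κ₂ b ∧ κ₃ a < κ₃ b) ∨
                    (κ₁ b < κ₁ a ∧ κ₂ b < κ₂ a ∧ κ₃ b < κ₃ a)))) :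
    ∃ p₁ p₂ p₃ : List V, IsPermutationOf p₁ ∧ IsPermutationOf p₂ ∧ IsPermutationOf p₃ ∧
      Represents (p₁ ++ p₂ ++ p₃) G := by
  obtain ⟨p₁, hp₁, hf₁⟩ := sorted_perm κ₁ h₁
  obtain ⟨p₂, hp₂, hf₂⟩ := sorted_perm κ₂ h₂
  obtain ⟨p₃, hp₃, hf₃⟩ := sorted_perm κ₃ h₃
  refine ⟨p₁, p₂, p₃, hp₁, hp₂, hp₃, ?_⟩
  intro a b hab
  rw [hadj a b hab]
  unfold Alternates
  rw [List.filter_append, List.filter_append]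
  obtain ⟨ho₁, hi₁⟩ := hf₁ a b hab
  obtain ⟨ho₂, hi₂⟩ := hf₂ a b hab
  obtain ⟨ho₃, hi₃⟩ := hf₃ a b hab
  obtain ⟨ho₁', hi₁'⟩ := hf₁ b a hab.symm
  obtain ⟨ho₂', hi₂'⟩ := hf₂ b a hab.symm
  obtain ⟨ho₃', hi₃'⟩ := hf₃ b a hab.symm
  -- note: predicate (x = b ∨ x = a) differs from (x = a ∨ x = b); fix by or_comm
  have hsw : ∀ p : List V, p.filter (fun x => decide (x = b ∨ x = a)) =
      p.filter (fun x => decide (x = a ∨ x = b)) := by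
    intro p
    apply List.filter_congr
    intro x _
    simp [or_comm]
  rw [hsw] at hi₁' hi₂' hi₃'
  constructor
  · rintro (⟨l1, l2, l3⟩ | ⟨l1, l2, l3⟩)
    · rw [hi₁.1 l1, hi₂.1 l2, hi₃.1 l3]
      simp [List.Chain', List.isChain_cons_cons, hab, Ne.symm hab]
    · rw [hi₁'.1 l1, hi₂'.1 l2, hi₃'.1 l3]
      simp [List.Chain', List.isChain_cons_cons, hab, Ne.symm hab]
  · intro hch
    rcases ho₁ with e1 | e1 <;> rcases ho₂ with e2 | e2 <;> rcases ho₃ with e3 | e3 <;>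
      rw [e1, e2, e3] at hch <;>
      first
        | exact Or.inl ⟨hi₁.2 e1, hi₂.2 e2, hi₃.2 e3⟩
        | exact Or.inr ⟨hi₁'.2 e1, hi₂'.2 e2, hi₃'.2 e3⟩
        | (exfalso; revert hch;
           simp [List.Chain', List.isChain_cons_cons, List.cons_append, List.nil_append, hab, Ne.symm hab])

end Aux

theorem stmt8 {V : Type*} [Fintype V] [DecidableEq V] (G : SimpleGraph V) (I C : Set V)
    (hsplit : IsSplitPartition G I C)
    (hcomp : ∃ D : V → V → Prop, IsTransitiveOrientation G D) :
    ∃ p₁ p₂ p₃ : List V, IsPermutationOf p₁ ∧ IsPermutationOf p₂ ∧ IsPermutationOf p₃ ∧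
      Represents (p₁ ++ p₂ ++ p₃) G := by
  classical
  obtain ⟨D, ⟨⟨horA, hasym⟩, htrans⟩⟩ := hcomp
  obtain ⟨hunion, hdisj, hind, hclique⟩ := hsplit
  have hirr : ∀ a, ¬ D a a := fun a h => hasym a a h h
  have hmem : ∀ v : V, v ∉ C → v ∈ I := by
    intro v hv
    have hu : v ∈ I ∪ C := hunion ▸ Set.mem_univ v
    rcases hu with h | h
    · exact h
    · exact absurd h hv
  set P : V → Set V := fun v => {x | x ∈ C ∧ D x v} with hPdef
  set S : V → Set V := fun v => {x | x ∈ C ∧ D v x} with hSdef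
  have hPub : ∀ v x, x ∈ P v ↔ (x ∈ C ∧ D x v) := fun v x => Iff.rfl
  have hSub : ∀ v x, x ∈ S v ↔ (x ∈ C ∧ D v x) := fun v x => Iff.rfl
  have hPS_disj : ∀ v, Disjoint (P v) (S v) := by
    intro v
    rw [Set.disjoint_left]
    rintro x ⟨hxC, hxv⟩ ⟨-, hvx⟩
    exact hirr x (htrans x v x hxv hvx)
  have hPC : ∀ v, P v ⊆ C := fun v x hx => hx.1
  have hSC : ∀ v, S v ⊆ C := fun v x hx => hx.1
  have hms : ∀ v, (P v).ncard + (S v).ncard ≤ C.ncard := by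
    intro v
    rw [← Set.ncard_union_eq (hPS_disj v)]
    exact Set.ncard_le_ncard (Set.union_subset (hPC v) (hSC v))
  have hF1 : ∀ v, ∀ c ∈ C, D c v → (P c).ncard < (P v).ncard := by
    intro v c hc hcv
    have hsub : insert c (P c) ⊆ P v := by
      rintro x hx
      rcases Set.mem_insert_iff.1 hx with rfl | ⟨hxC, hxc⟩
      · exact ⟨hc, hcv⟩
      · exact ⟨hxC, htrans x c v hxc hcv⟩
    have hnm : c ∉ P c := fun hx => hirr c hx.2
    have h1 := Set.ncard_insert_of_notMem hnm
    have h2 := Set.ncard_le_ncard hsub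
    omega
  have hF2 : ∀ v, ∀ c ∈ C, ¬ D c v → (P v).ncard ≤ (P c).ncard := by
    intro v c hc hncv
    refine Set.ncard_le_ncard ?_
    rintro x ⟨hxC, hxv⟩
    refine ⟨hxC, ?_⟩
    have hxc : x ≠ c := by rintro rfl; exact hncv hxv
    rcases (horA x c).1 (hclique x hxC c hc hxc) with h | h
    · exact h
    · exact absurd (htrans c x v h hxv) hncv
  have hF1s : ∀ v, ∀ c ∈ C, D v c → (S c).ncard < (S v).ncard := by
    intro v c hc hvc
    have hsub : insert c (S c) ⊆ S v := by
      rintro x hx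
      rcases Set.mem_insert_iff.1 hx with rfl | ⟨hxC, hxc⟩
      · exact ⟨hc, hvc⟩
      · exact ⟨hxC, htrans v c x hvc hxc⟩
    have hnm : c ∉ S c := fun hx => hirr c hx.2
    have h1 := Set.ncard_insert_of_notMem hnm
    have h2 := Set.ncard_le_ncard hsub
    omega
  have hF2s : ∀ v, ∀ c ∈ C, ¬ D v c → (S v).ncard ≤ (S c).ncard := by
    intro v c hc hnvc
    refine Set.ncard_le_ncard ?_
    rintro x ⟨hxC, hvx⟩
    refine ⟨hxC, ?_⟩
    have hxc : x ≠ c := by rintro rfl; exact hnvc hvx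
    rcases (horA x c).1 (hclique x hxC c hc hxc) with h | h
    · exact absurd (htrans v x c hvx h) hnvc
    · exact h
  have hF3 : ∀ c ∈ C, (P c).ncard + (S c).ncard + 1 = C.ncard := by
    intro c hc
    have he : P c ∪ S c = C \ {c} := by
      ext x
      constructor
      · rintro (⟨hxC, hx⟩ | ⟨hxC, hx⟩) <;>
          exact ⟨hxC, fun h => hirr c (by rw [Set.mem_singleton_iff.1 h] at hx; exact hx)⟩
      · rintro ⟨hxC, hxne⟩
        have hxc : x ≠ c := fun h => hxne (by simp [h])
        rcases (horA x c).1 (hclique x hxC c hc hxc) with h | h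
        · exact Or.inl ⟨hxC, h⟩
        · exact Or.inr ⟨hxC, h⟩
    have h1 : (P c ∪ S c).ncard = (P c).ncard + (S c).ncard := Set.ncard_union_eq (hPS_disj c)
    have h2 : (C \ {c}).ncard = C.ncard - 1 := Set.ncard_diff_singleton_of_mem hc
    have h3 : 0 < C.ncard := (Set.ncard_pos (Set.toFinite C)).2 ⟨c, hc⟩
    rw [he] at h1
    omega
  have hF5 : ∀ a ∈ I, ∀ b ∈ I, (P b).ncard + (S a).ncard ≤ C.ncard := by
    intro a ha b hb
    have hdisjPS : Disjoint (P b) (S a) := by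
      rw [Set.disjoint_left]
      rintro x ⟨hxC, hxb⟩ ⟨-, hax⟩
      exact hind a ha b hb ((horA a b).2 (Or.inl (htrans a x b hax hxb)))
    rw [← Set.ncard_union_eq hdisjPS]
    exact Set.ncard_le_ncard (Set.union_subset (hPC b) (hSC a))
  set Ifin : Finset V := Finset.univ.filter (fun v => v ∈ I) with hIfin
  set g : ℕ := Ifin.sup (fun v => (P v).ncard) with hgdef
  have hg1 : ∀ a ∈ I, (P a).ncard ≤ g := by
    intro a ha
    have haf : a ∈ Ifin := by rw [hIfin]; simp [ha]
    rw [hgdef]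
    exact Finset.le_sup (f := fun v => (P v).ncard) haf
  have hg2 : ∀ a ∈ I, g + (S a).ncard ≤ C.ncard := by
    intro a ha
    have hgle : g ≤ C.ncard - (S a).ncard := by
      rw [hgdef]
      refine Finset.sup_le ?_
      intro b hb
      rw [hIfin] at hb
      have hbI : b ∈ I := (Finset.mem_filter.1 hb).2
      have := hF5 a ha b hbI
      omega
    have := hms a
    omega
  set e := Fintype.equivFin V with hedef
  have hιinj : ∀ u v : V, (e u).val = (e v).val → u = v := fun u v h => e.injective (Fin.ext h)
  have hιlt : ∀ v : V, (e v).val < Fintype.card V := fun v => (e v).isLt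
  have hCI : ∀ c a : V, c ∈ C → a ∉ C →
      (G.Adj c a ↔ ((P c).ncard < (P a).ncard ∨ C.ncard - (S a).ncard ≤ (P c).ncard)) := by
    intro c a hc ha
    have hF3c := hF3 c hc
    have hDca : D c a ↔ (P c).ncard < (P a).ncard := by
      constructor
      · exact hF1 a c hc
      · intro h
        by_contra hn
        have := hF2 a c hc hn
        omega
    have hDac : D a c ↔ C.ncard - (S a).ncard ≤ (P c).ncard := by
      constructor
      · intro h
        have := hF1s a c hc h
        have := hms a
        omega
      · intro h
        by_contra hn
        have h2 := hF2s a c hc hn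
        omega
    rw [horA c a, hDca, hDac]
  obtain ⟨κ₁, κ₂, κ₃, hk1, hk2, hk3, hadj⟩ :=
    keys_good G (fun v => v ∈ C) (fun v => (P v).ncard) (fun v => (S v).ncard)
      (fun v => (e v).val) C.ncard (Fintype.card V) g
      hιinj hιlt hms
      (fun a b ha hb hab => hclique a ha b hb hab)
      (fun a b ha hb => hind a (hmem a ha) b (hmem b hb))
      (fun c a hc ha => hCI c a hc ha)
      (fun a ha => hg1 a (hmem a ha))
      (fun a ha => hg2 a (hmem a ha))
      (fun a b ha hb => hF5 a (hmem a ha) b (hmem b hb))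
  exact key_represents G κ₁ κ₂ κ₃ hk1 hk2 hk3 hadj
end

section
/- Let G be a graph that is represented by a concatenation of k permutations of its vertex set (i.e., G is permutationally k-representable). Then G is a comparability graph: the relation a < b defined by 'a precedes b in every one of the k permutations, and ab is an edge' extends to a transitive orientation of G. -/
section Aux
variable {V : Type*} [DecidableEq V]

lemma filt_single {a b : V} (p : List V) (hnd : p.Nodup) (ha : a ∉ p) (hb : b ∈ p) :
    p.filter (fun x => decide (x = a ∨ x = b)) = [b] := by
  induction p with
  | nil => simp at hb
  | cons x t ih =>
    by_cases hxb : x = b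
    · subst hxb
      have hat : a ∉ t := fun h => ha (List.mem_cons_of_mem _ h)
      have hbt : x ∉ t := (List.nodup_cons.mp hnd).1
      have h0 : t.filter (fun y => decide (y = a ∨ y = x)) = [] := by
        rw [List.filter_eq_nil_iff]
        intro y hy h
        simp only [decide_eq_true_eq] at h
        rcases h with rfl | rfl
        exacts [hat hy, hbt hy]
      rw [List.filter_cons, if_pos (by simp), h0]
    · have hx_a : x ≠ a := by rintro rfl; exact ha (List.mem_cons_self)
      have hbt : b ∈ t := by
        rcases List.mem_cons.mp hb with h | h
        · exact absurd h.symm hxb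
        · exact h
      rw [List.filter_cons, if_neg (by simp [hx_a, hxb])]
      exact ih (List.nodup_cons.mp hnd).2 (fun h => ha (List.mem_cons_of_mem _ h)) hbt

lemma filt_eq {a b : V} (hab : a ≠ b) (p : List V) (hnd : p.Nodup) (ha : a ∈ p) (hb : b ∈ p) :
    p.filter (fun x => decide (x = a ∨ x = b)) =
      if p.idxOf a < p.idxOf b then [a, b] else [b, a] := by
  induction p with
  | nil => simp at ha
  | cons x t ih =>
    by_cases hxa : x = a
    · subst hxa
      have hat : x ∉ t := (List.nodup_cons.mp hnd).1
      have hbt : b ∈ t := by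
        rcases List.mem_cons.mp hb with h | h
        · exact absurd h.symm hab
        · exact h
      have hf : t.filter (fun y => decide (y = x ∨ y = b)) = [b] :=
        filt_single (a := x) (b := b) t (List.nodup_cons.mp hnd).2 hat hbt
      have hia : (x :: t).idxOf x = 0 := List.idxOf_cons_self
      have hib : (x :: t).idxOf b = t.idxOf b + 1 :=
        List.idxOf_cons_ne _ hab
      rw [hia, hib, if_pos (Nat.succ_pos _), List.filter_cons, if_pos (by simp), hf]
    · by_cases hxb : x = b
      · subst hxb
        have hbt : x ∉ t := (List.nodup_cons.mp hnd).1
        have hat : a ∈ t := by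
          rcases List.mem_cons.mp ha with h | h
          · exact absurd h.symm hxa
          · exact h
        have hf : t.filter (fun y => decide (y = a ∨ y = x)) = [a] := by
          have h1 := filt_single (a := x) (b := a) t (List.nodup_cons.mp hnd).2 hbt hat
          rw [← h1]
          apply List.filter_congr
          intro y _
          exact decide_eq_decide.mpr or_comm
        have hia : (x :: t).idxOf a = t.idxOf a + 1 :=
          List.idxOf_cons_ne _ (Ne.symm hab)
        have hib : (x :: t).idxOf x = 0 := List.idxOf_cons_self
        rw [hia, hib, if_neg (Nat.not_lt_zero _), List.filter_cons, if_pos (by simp), hf]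
      · have hat : a ∈ t := by
          rcases List.mem_cons.mp ha with h | h
          · exact absurd h.symm hxa
          · exact h
        have hbt : b ∈ t := by
          rcases List.mem_cons.mp hb with h | h
          · exact absurd h.symm hxb
          · exact h
        have hia : (x :: t).idxOf a = t.idxOf a + 1 :=
          List.idxOf_cons_ne _ hxa
        have hib : (x :: t).idxOf b = t.idxOf b + 1 :=
          List.idxOf_cons_ne _ hxb
        rw [List.filter_cons, if_neg (by simp [hxa, hxb]), hia, hib,
          ih (List.nodup_cons.mp hnd).2 hat hbt]
        simp [Nat.add_lt_add_iff_right]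

lemma chain_flatten {a b : V} (hab : a ≠ b) : ∀ (L : List (List V)),
    (∀ l ∈ L, l = [a, b] ∨ l = [b, a]) →
    (List.Chain' (· ≠ ·) L.flatten ↔ (∀ l ∈ L, l = [a, b]) ∨ ∀ l ∈ L, l = [b, a]) := by
  intro L
  induction L with
  | nil => simp [List.Chain']
  | cons l L ih =>
    intro hL
    have hl := hL l (List.mem_cons_self)
    have hL' : ∀ l' ∈ L, l' = [a, b] ∨ l' = [b, a] := fun l' h => hL l' (List.mem_cons_of_mem _ h)
    cases L with
    | nil =>
      simp only [List.flatten_cons, List.flatten_nil, List.append_nil, List.mem_singleton,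
        forall_eq]
      rcases hl with rfl | rfl <;> simp [List.Chain', List.isChain_cons_cons, hab, hab.symm]
    | cons l' L' =>
      have hl' := hL' l' (List.mem_cons_self)
      have hhead : ∃ y t, (l' :: L').flatten = y :: t ∧ y = l'.head (by rcases hl' with rfl|rfl <;> simp) := by
        rcases hl' with rfl | rfl <;> exact ⟨_, _, rfl, rfl⟩
      obtain ⟨y, t, hyt, hy⟩ := hhead
      simp only [List.Chain'] at ih ⊢
      rw [List.flatten_cons, List.isChain_append, ih hL', hyt]
      rcases hl with rfl | rfl <;> rcases hl' with rfl | rfl <;>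
        simp_all [List.forall_mem_cons, hab, hab.symm] <;> tauto
end Aux

lemma alt_char {V : Type*} [DecidableEq V] {a b : V} (hab : a ≠ b) (ps : List (List V))
    (hperm : ∀ p ∈ ps, IsPermutationOf p) :
    Alternates ps.flatten a b ↔
      ((∀ p ∈ ps, p.idxOf a < p.idxOf b) ∨ ∀ p ∈ ps, p.idxOf b < p.idxOf a) := by
  have hmap : ∀ qs : List (List V),
      qs.flatten.filter (fun x => decide (x = a ∨ x = b)) =
      (qs.map fun p => p.filter (fun x => decide (x = a ∨ x = b))).flatten := by
    intro qs
    induction qs with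
    | nil => rfl
    | cons p qs ih => simp [List.filter_append, ih]
  have key : ∀ p ∈ ps,
      (p.filter (fun x => decide (x = a ∨ x = b)) = [a, b] ↔ p.idxOf a < p.idxOf b) ∧
      (p.filter (fun x => decide (x = a ∨ x = b)) = [b, a] ↔ p.idxOf b < p.idxOf a) := by
    intro p hp
    obtain ⟨hnd, hall⟩ := hperm p hp
    have ha := hall a
    have hb := hall b
    have hne : p.idxOf a ≠ p.idxOf b := fun h => hab ((List.idxOf_inj ha).mp h)
    rw [filt_eq hab p hnd ha hb]
    by_cases h : p.idxOf a < p.idxOf b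
    · have h2 : ¬ p.idxOf b < p.idxOf a := by omega
      rw [if_pos h]
      simp [h, h2, List.cons.injEq, hab, hab.symm]
    · have h2 : p.idxOf b < p.idxOf a := by omega
      rw [if_neg h]
      simp [h, h2, List.cons.injEq, hab, hab.symm]
  have hpieces : ∀ l ∈ ps.map (fun p => p.filter (fun x => decide (x = a ∨ x = b))),
      l = [a, b] ∨ l = [b, a] := by
    intro l hl
    obtain ⟨p, hp, rfl⟩ := List.mem_map.mp hl
    obtain ⟨hnd, hall⟩ := hperm p hp
    rw [filt_eq hab p hnd (hall a) (hall b)]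
    split
    · exact Or.inl rfl
    · exact Or.inr rfl
  unfold Alternates
  rw [hmap ps, chain_flatten hab _ hpieces]
  constructor
  · rintro (h | h)
    · exact Or.inl fun p hp => (key p hp).1.mp (h _ (List.mem_map_of_mem hp))
    · exact Or.inr fun p hp => (key p hp).2.mp (h _ (List.mem_map_of_mem hp))
  · rintro (h | h)
    · refine Or.inl fun l hl => ?_
      obtain ⟨p, hp, rfl⟩ := List.mem_map.mp hl
      exact (key p hp).1.mpr (h p hp)
    · refine Or.inr fun l hl => ?_
      obtain ⟨p, hp, rfl⟩ := List.mem_map.mp hl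
      exact (key p hp).2.mpr (h p hp)

theorem stmt10 {V : Type*} [DecidableEq V] (G : SimpleGraph V) (k : ℕ)
    (ps : List (List V)) (hlen : ps.length = k) (hne : ps ≠ [])
    (hperm : ∀ p ∈ ps, IsPermutationOf p) (hrep : Represents ps.flatten G) :
    IsTransitiveOrientation G
      (fun a b => G.Adj a b ∧ ∀ p ∈ ps, p.idxOf a < p.idxOf b) := by
  constructor
  · constructor
    · intro x y
      constructor
      · intro hadj
        have hxy : x ≠ y := hadj.ne
        rcases (alt_char hxy ps hperm).mp ((hrep x y hxy).mp hadj) with h | h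
        · exact Or.inl ⟨hadj, h⟩
        · exact Or.inr ⟨hadj.symm, h⟩
      · rintro (⟨h, _⟩ | ⟨h, _⟩)
        exacts [h, h.symm]
    · rintro x y ⟨_, h1⟩ ⟨_, h2⟩
      have hp : ps.head hne ∈ ps := List.head_mem hne
      exact absurd (h2 _ hp) (Nat.lt_asymm (h1 _ hp))
  · rintro x y z ⟨hxy, h1⟩ ⟨hyz, h2⟩
    have hall : ∀ p ∈ ps, p.idxOf x < p.idxOf z := fun p hp => (h1 p hp).trans (h2 p hp)
    have hxz : x ≠ z := by
      have hp : ps.head hne ∈ ps := List.head_mem hne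
      intro h
      rw [h] at hall
      exact lt_irrefl _ (hall _ hp)
    exact ⟨(hrep x z hxz).mpr ((alt_char hxz ps hperm).mpr (Or.inl hall)), hall⟩
end

section
/- The graph B₄ is not a permutation graph; equivalently, B₄ cannot be represented by a concatenation of two permutations of its vertex set, so ℛᵖ(B₄) = 3. -/
section Aux

instance : DecidableRel B4.Adj := fun a b =>
  inferInstanceAs (Decidable (a ≠ b ∧ _))

def chainNeB : List (Fin 7) → Bool
  | [] => true
  | [_] => true
  | a :: b :: t => decide (a ≠ b) && chainNeB (b :: t)

lemma chainNeB_iff : ∀ l : List (Fin 7), chainNeB l = true ↔ l.Chain' (· ≠ ·)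
  | [] => by simp [chainNeB]; exact List.isChain_nil
  | [a] => by simp [chainNeB]; exact List.isChain_singleton a
  | a :: b :: t => by
    rw [chainNeB, Bool.and_eq_true, decide_eq_true_eq,
      chainNeB_iff (b :: t)]
    exact List.isChain_cons_cons.symm

instance (w : List (Fin 7)) (a b : Fin 7) : Decidable (Alternates w a b) :=
  decidable_of_iff _ (chainNeB_iff (w.filter fun x => decide (x = a ∨ x = b)))

instance (w : List (Fin 7)) : Decidable (Represents w B4) :=
  inferInstanceAs (Decidable (∀ _, _))

variable {V : Type*} [DecidableEq V]

lemma filter_nil_of_not_mem {a b : V} {t : List V} (ha : a ∉ t) (hb : b ∉ t) :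
    t.filter (fun x => decide (x = a ∨ x = b)) = [] := by
  apply List.filter_eq_nil_iff.2
  intro x hx
  simp only [decide_eq_true_eq]
  rintro (rfl | rfl) <;> [exact ha hx; exact hb hx]

lemma filter_single {a b : V} {t : List V} (hn : t.Nodup) (ha : a ∉ t) (hb : b ∈ t) :
    t.filter (fun x => decide (x = a ∨ x = b)) = [b] := by
  induction t with
  | nil => simp at hb
  | cons x t ih =>
    rcases List.nodup_cons.1 hn with ⟨hxt, hnt⟩
    have hat : a ∉ t := fun h => ha (List.mem_cons_of_mem _ h)
    by_cases hxb : x = b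
    · subst hxb
      simp only [List.filter_cons]
      rw [if_pos (by simp), filter_nil_of_not_mem hat hxt]
    · have hxa : x ≠ a := fun h => ha (h ▸ (List.mem_cons_self (a := x) (l := t)))
      have hbt : b ∈ t := by
        rcases List.mem_cons.1 hb with h | h
        · exact absurd h.symm hxb
        · exact h
      simp only [List.filter_cons]
      rw [if_neg (by simp [hxa, hxb]), ih hnt hat hbt]

lemma filter_single' {a b : V} {t : List V} (hn : t.Nodup) (ha : a ∈ t) (hb : b ∉ t) :
    t.filter (fun x => decide (x = a ∨ x = b)) = [a] := by
  have : (fun x => decide (x = a ∨ x = b)) = (fun x => decide (x = b ∨ x = a)) := by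
    funext x; exact Bool.decide_congr or_comm
  rw [this, filter_single hn hb ha]

lemma filter_pair {a b : V} {p : List V} (hn : p.Nodup) (ha : a ∈ p) (hb : b ∈ p)
    (hab : a ≠ b) :
    p.filter (fun x => decide (x = a ∨ x = b)) =
      if p.idxOf a < p.idxOf b then [a, b] else [b, a] := by
  induction p with
  | nil => simp at ha
  | cons x t ih =>
    rcases List.nodup_cons.1 hn with ⟨hxt, hnt⟩
    by_cases hxa : x = a
    · subst hxa
      have hbt : b ∈ t := by
        rcases List.mem_cons.1 hb with h | h
        · exact absurd h.symm hab
        · exact h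
      simp only [List.filter_cons]
      rw [if_pos (by simp), filter_single hnt hxt hbt,
        List.idxOf_cons_self, List.idxOf_cons_ne _ hab,
        if_pos (Nat.succ_pos _)]
    · by_cases hxb : x = b
      · subst hxb
        have hat : a ∈ t := by
          rcases List.mem_cons.1 ha with h | h
          · exact absurd h.symm hxa
          · exact h
        simp only [List.filter_cons]
        rw [if_pos (by simp), filter_single' hnt hat hxt,
          List.idxOf_cons_self, List.idxOf_cons_ne _ (Ne.symm hab),
          if_neg (Nat.not_lt_zero _)]
      · have hat : a ∈ t := by
          rcases List.mem_cons.1 ha with h | h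
          · exact absurd h.symm hxa
          · exact h
        have hbt : b ∈ t := by
          rcases List.mem_cons.1 hb with h | h
          · exact absurd h.symm hxb
          · exact h
        simp only [List.filter_cons]
        rw [if_neg (by simp; exact ⟨hxa, hxb⟩), ih hnt hat hbt,
          List.idxOf_cons_ne _ hxa,
          List.idxOf_cons_ne _ hxb]
        simp only [Nat.succ_lt_succ_iff]

lemma alt_iff {p₁ p₂ : List V} (h₁ : IsPermutationOf p₁) (h₂ : IsPermutationOf p₂)
    {a b : V} (hab : a ≠ b) :
    Alternates (p₁ ++ p₂) a b ↔
      (p₁.idxOf a < p₁.idxOf b ↔ p₂.idxOf a < p₂.idxOf b) := by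
  unfold Alternates
  rw [List.filter_append, filter_pair h₁.1 (h₁.2 a) (h₁.2 b) hab,
    filter_pair h₂.1 (h₂.2 a) (h₂.2 b) hab]
  by_cases c1 : p₁.idxOf a < p₁.idxOf b <;>
    by_cases c2 : p₂.idxOf a < p₂.idxOf b <;>
      simp [c1, c2, List.Chain', List.isChain_cons_cons, hab, Ne.symm hab]

end Aux

def leafB (p0 p1 p2 p3 p4 p5 p6 : Fin 7) : Bool :=
  (p0 < p5 && p5 < p3) || ((p0 < p5 && p5 < p4) || ((p0 < p5 && p5 < p6 && !(p0 < p6)) || ((p0 < p6 && p6 < p1) || ((p0 < p6 && p6 < p4) || ((p0 < p6 && p6 < p5 && !(p0 < p5)) || ((p1 < p6 && p6 < p0) || ((p1 < p6 && p6 < p4) || ((p1 < p6 && p6 < p5) || ((p2 < p4 && p4 < p3) || ((p2 < p4 && p4 < p5) || ((p2 < p4 && p4 < p6) || ((p3 < p4 && p4 < p2) || ((p3 < p4 && p4 < p5 && !(p3 < p5)) || ((p3 < p4 && p4 < p6) || ((p3 < p5 && p5 < p0) || ((p3 < p5 && p5 < p4 && !(p3 < p4)) || ((p3 < p5 && p5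 < p6) || ((p4 < p3 && p3 < p5 && !(p4 < p5)) || ((p4 < p5 && p5 < p0) || ((p4 < p5 && p5 < p3 && !(p4 < p3)) || ((p4 < p5 && p5 < p6 && !(p4 < p6)) || ((p4 < p6 && p6 < p0) || ((p4 < p6 && p6 < p1) || ((p4 < p6 && p6 < p5 && !(p4 < p5)) || ((p5 < p0 && p0 < p6 && !(p5 < p6)) || ((p5 < p3 && p3 < p4 && !(p5 < p4)) || ((p5 < p4 && p4 < p2) || ((p5 < p4 && p4 < p3 && !(p5 < p3)) || ((p5 < p4 && p4 < p6 && !(p5 < p6)) || ((p5 < p6 && p6 < p0 && !(p5 < p0)) || ((p5 < p6 && p6 < p1) || ((p5 < p6 && p6 < p4 && !(p5 < p4)) || ((p6 < p0 && p0 < p5 && !(p6 < p5)) || ((p6 < p4 && p4 < p2) || ((p6 < p4 && p4 < p3) || ((p6 < p4 && p4 < p5 && !(p6 < p5)) || ((p6 < p5 && p5 < p0 && !(p6 < p0)) || ((p6 < p5 && p5 < p3) || ((p6 < p5 && p5 < p4 && !(p6 < p4)))))))))))))))))))))))))))))))))))))))))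

set_option maxRecDepth 10000 in
set_option maxHeartbeats 8000000 in
theorem key : ∀ p0 p1 : Fin 7, p0 = p1 ∨ ∀ p2, (p2 = p0 ∨ p2 = p1) ∨
    ∀ p3, (p3 = p0 ∨ p3 = p1 ∨ p3 = p2) ∨
    ∀ p4, (p4 = p0 ∨ p4 = p1 ∨ p4 = p2 ∨ p4 = p3) ∨
    ∀ p5, (p5 = p0 ∨ p5 = p1 ∨ p5 = p2 ∨ p5 = p3 ∨ p5 = p4) ∨
    ∀ p6, (p6 = p0 ∨ p6 = p1 ∨ p6 = p2 ∨ p6 = p3 ∨ p6 = p4 ∨ p6 = p5) ∨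
    leafB p0 p1 p2 p3 p4 p5 p6 = true := by decide

theorem leaf_contra (pos : Fin 7 → Fin 7) (D : Fin 7 → Fin 7 → Prop)
    (hD : ∀ a b : Fin 7, ¬ B4.Adj a b → a ≠ b → pos a < pos b → D a b)
    (htrans : ∀ a b c, D a b → D b c → D a c)
    (hnot : ∀ a b, D a b → ¬ B4.Adj a b ∧ pos a < pos b)
    (h : leafB (pos 0) (pos 1) (pos 2) (pos 3) (pos 4) (pos 5) (pos 6) = true) : False := by
  simp only [leafB, Bool.or_eq_true, Bool.and_eq_true, decide_eq_true_eq,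
    Bool.not_eq_true', decide_eq_false_iff_not] at h
  rcases h with ⟨h1, h2⟩ | h
  · have d := htrans _ _ _ (hD 0 5 (by decide) (by decide) h1) (hD 5 3 (by decide) (by decide) h2)
    exact (hnot _ _ d).1 (by decide)
  rcases h with ⟨h1, h2⟩ | h
  · have d := htrans _ _ _ (hD 0 5 (by decide) (by decide) h1) (hD 5 4 (by decide) (by decide) h2)
    exact (hnot _ _ d).1 (by decide)
  rcases h with ⟨⟨h1, h2⟩, h3⟩ | h
  · have d := htrans _ _ _ (hD 0 5 (by decide) (by decide) h1) (hD 5 6 (by decide) (by decide) h2)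
    exact h3 ((hnot _ _ d).2)
  rcases h with ⟨h1, h2⟩ | h
  · have d := htrans _ _ _ (hD 0 6 (by decide) (by decide) h1) (hD 6 1 (by decide) (by decide) h2)
    exact (hnot _ _ d).1 (by decide)
  rcases h with ⟨h1, h2⟩ | h
  · have d := htrans _ _ _ (hD 0 6 (by decide) (by decide) h1) (hD 6 4 (by decide) (by decide) h2)
    exact (hnot _ _ d).1 (by decide)
  rcases h with ⟨⟨h1, h2⟩, h3⟩ | h
  · have d := htrans _ _ _ (hD 0 6 (by decide) (by decide) h1) (hD 6 5 (by decide) (by decide) h2)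
    exact h3 ((hnot _ _ d).2)
  rcases h with ⟨h1, h2⟩ | h
  · have d := htrans _ _ _ (hD 1 6 (by decide) (by decide) h1) (hD 6 0 (by decide) (by decide) h2)
    exact (hnot _ _ d).1 (by decide)
  rcases h with ⟨h1, h2⟩ | h
  · have d := htrans _ _ _ (hD 1 6 (by decide) (by decide) h1) (hD 6 4 (by decide) (by decide) h2)
    exact (hnot _ _ d).1 (by decide)
  rcases h with ⟨h1, h2⟩ | h
  · have d := htrans _ _ _ (hD 1 6 (by decide) (by decide) h1) (hD 6 5 (by decide) (by decide) h2)
    exact (hnot _ _ d).1 (by decide)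
  rcases h with ⟨h1, h2⟩ | h
  · have d := htrans _ _ _ (hD 2 4 (by decide) (by decide) h1) (hD 4 3 (by decide) (by decide) h2)
    exact (hnot _ _ d).1 (by decide)
  rcases h with ⟨h1, h2⟩ | h
  · have d := htrans _ _ _ (hD 2 4 (by decide) (by decide) h1) (hD 4 5 (by decide) (by decide) h2)
    exact (hnot _ _ d).1 (by decide)
  rcases h with ⟨h1, h2⟩ | h
  · have d := htrans _ _ _ (hD 2 4 (by decide) (by decide) h1) (hD 4 6 (by decide) (by decide) h2)
    exact (hnot _ _ d).1 (by decide)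
  rcases h with ⟨h1, h2⟩ | h
  · have d := htrans _ _ _ (hD 3 4 (by decide) (by decide) h1) (hD 4 2 (by decide) (by decide) h2)
    exact (hnot _ _ d).1 (by decide)
  rcases h with ⟨⟨h1, h2⟩, h3⟩ | h
  · have d := htrans _ _ _ (hD 3 4 (by decide) (by decide) h1) (hD 4 5 (by decide) (by decide) h2)
    exact h3 ((hnot _ _ d).2)
  rcases h with ⟨h1, h2⟩ | h
  · have d := htrans _ _ _ (hD 3 4 (by decide) (by decide) h1) (hD 4 6 (by decide) (by decide) h2)
    exact (hnot _ _ d).1 (by decide)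
  rcases h with ⟨h1, h2⟩ | h
  · have d := htrans _ _ _ (hD 3 5 (by decide) (by decide) h1) (hD 5 0 (by decide) (by decide) h2)
    exact (hnot _ _ d).1 (by decide)
  rcases h with ⟨⟨h1, h2⟩, h3⟩ | h
  · have d := htrans _ _ _ (hD 3 5 (by decide) (by decide) h1) (hD 5 4 (by decide) (by decide) h2)
    exact h3 ((hnot _ _ d).2)
  rcases h with ⟨h1, h2⟩ | h
  · have d := htrans _ _ _ (hD 3 5 (by decide) (by decide) h1) (hD 5 6 (by decide) (by decide) h2)
    exact (hnot _ _ d).1 (by decide)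
  rcases h with ⟨⟨h1, h2⟩, h3⟩ | h
  · have d := htrans _ _ _ (hD 4 3 (by decide) (by decide) h1) (hD 3 5 (by decide) (by decide) h2)
    exact h3 ((hnot _ _ d).2)
  rcases h with ⟨h1, h2⟩ | h
  · have d := htrans _ _ _ (hD 4 5 (by decide) (by decide) h1) (hD 5 0 (by decide) (by decide) h2)
    exact (hnot _ _ d).1 (by decide)
  rcases h with ⟨⟨h1, h2⟩, h3⟩ | h
  · have d := htrans _ _ _ (hD 4 5 (by decide) (by decide) h1) (hD 5 3 (by decide) (by decide) h2)
    exact h3 ((hnot _ _ d).2)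
  rcases h with ⟨⟨h1, h2⟩, h3⟩ | h
  · have d := htrans _ _ _ (hD 4 5 (by decide) (by decide) h1) (hD 5 6 (by decide) (by decide) h2)
    exact h3 ((hnot _ _ d).2)
  rcases h with ⟨h1, h2⟩ | h
  · have d := htrans _ _ _ (hD 4 6 (by decide) (by decide) h1) (hD 6 0 (by decide) (by decide) h2)
    exact (hnot _ _ d).1 (by decide)
  rcases h with ⟨h1, h2⟩ | h
  · have d := htrans _ _ _ (hD 4 6 (by decide) (by decide) h1) (hD 6 1 (by decide) (by decide) h2)
    exact (hnot _ _ d).1 (by decide)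
  rcases h with ⟨⟨h1, h2⟩, h3⟩ | h
  · have d := htrans _ _ _ (hD 4 6 (by decide) (by decide) h1) (hD 6 5 (by decide) (by decide) h2)
    exact h3 ((hnot _ _ d).2)
  rcases h with ⟨⟨h1, h2⟩, h3⟩ | h
  · have d := htrans _ _ _ (hD 5 0 (by decide) (by decide) h1) (hD 0 6 (by decide) (by decide) h2)
    exact h3 ((hnot _ _ d).2)
  rcases h with ⟨⟨h1, h2⟩, h3⟩ | h
  · have d := htrans _ _ _ (hD 5 3 (by decide) (by decide) h1) (hD 3 4 (by decide) (by decide) h2)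
    exact h3 ((hnot _ _ d).2)
  rcases h with ⟨h1, h2⟩ | h
  · have d := htrans _ _ _ (hD 5 4 (by decide) (by decide) h1) (hD 4 2 (by decide) (by decide) h2)
    exact (hnot _ _ d).1 (by decide)
  rcases h with ⟨⟨h1, h2⟩, h3⟩ | h
  · have d := htrans _ _ _ (hD 5 4 (by decide) (by decide) h1) (hD 4 3 (by decide) (by decide) h2)
    exact h3 ((hnot _ _ d).2)
  rcases h with ⟨⟨h1, h2⟩, h3⟩ | h
  · have d := htrans _ _ _ (hD 5 4 (by decide) (by decide) h1) (hD 4 6 (by decide) (by decide) h2)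
    exact h3 ((hnot _ _ d).2)
  rcases h with ⟨⟨h1, h2⟩, h3⟩ | h
  · have d := htrans _ _ _ (hD 5 6 (by decide) (by decide) h1) (hD 6 0 (by decide) (by decide) h2)
    exact h3 ((hnot _ _ d).2)
  rcases h with ⟨h1, h2⟩ | h
  · have d := htrans _ _ _ (hD 5 6 (by decide) (by decide) h1) (hD 6 1 (by decide) (by decide) h2)
    exact (hnot _ _ d).1 (by decide)
  rcases h with ⟨⟨h1, h2⟩, h3⟩ | h
  · have d := htrans _ _ _ (hD 5 6 (by decide) (by decide) h1) (hD 6 4 (by decide) (by decide) h2)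
    exact h3 ((hnot _ _ d).2)
  rcases h with ⟨⟨h1, h2⟩, h3⟩ | h
  · have d := htrans _ _ _ (hD 6 0 (by decide) (by decide) h1) (hD 0 5 (by decide) (by decide) h2)
    exact h3 ((hnot _ _ d).2)
  rcases h with ⟨h1, h2⟩ | h
  · have d := htrans _ _ _ (hD 6 4 (by decide) (by decide) h1) (hD 4 2 (by decide) (by decide) h2)
    exact (hnot _ _ d).1 (by decide)
  rcases h with ⟨h1, h2⟩ | h
  · have d := htrans _ _ _ (hD 6 4 (by decide) (by decide) h1) (hD 4 3 (by decide) (by decide) h2)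
    exact (hnot _ _ d).1 (by decide)
  rcases h with ⟨⟨h1, h2⟩, h3⟩ | h
  · have d := htrans _ _ _ (hD 6 4 (by decide) (by decide) h1) (hD 4 5 (by decide) (by decide) h2)
    exact h3 ((hnot _ _ d).2)
  rcases h with ⟨⟨h1, h2⟩, h3⟩ | h
  · have d := htrans _ _ _ (hD 6 5 (by decide) (by decide) h1) (hD 5 0 (by decide) (by decide) h2)
    exact h3 ((hnot _ _ d).2)
  rcases h with ⟨h1, h2⟩ | h
  · have d := htrans _ _ _ (hD 6 5 (by decide) (by decide) h1) (hD 5 3 (by decide) (by decide) h2)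
    exact (hnot _ _ d).1 (by decide)
  rcases h with ⟨⟨h1, h2⟩, h3⟩
  have d := htrans _ _ _ (hD 6 5 (by decide) (by decide) h1) (hD 5 4 (by decide) (by decide) h2)
  exact h3 ((hnot _ _ d).2)


theorem noTwo : ¬ ∃ p₁ p₂ : List (Fin 7), IsPermutationOf p₁ ∧ IsPermutationOf p₂ ∧
    Represents (p₁ ++ p₂) B4 := by
  rintro ⟨p₁, p₂, h₁, h₂, hrep⟩
  have hlen₁ : p₁.length = 7 := by
    have hp : List.Perm p₁ (List.finRange 7) :=
      (List.perm_ext_iff_of_nodup h₁.1 (List.nodup_finRange 7)).2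
        (fun v => by simp [h₁.2 v])
    simpa using hp.length_eq
  have idx1_inj : ∀ {a b : Fin 7}, p₁.idxOf a = p₁.idxOf b → a = b :=
    fun {a b} h => (List.idxOf_inj (h₁.2 a)).1 h
  have idx2_inj : ∀ {a b : Fin 7}, p₂.idxOf a = p₂.idxOf b → a = b :=
    fun {a b} h => (List.idxOf_inj (h₂.2 a)).1 h
  have hadj : ∀ a b : Fin 7, a ≠ b →
      (B4.Adj a b ↔ (p₁.idxOf a < p₁.idxOf b ↔ p₂.idxOf a < p₂.idxOf b)) :=
    fun a b hab => (hrep a b hab).trans (alt_iff h₁ h₂ hab)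
  have flip2 : ∀ a b : Fin 7, a ≠ b → ¬ p₂.idxOf a < p₂.idxOf b →
      p₂.idxOf b < p₂.idxOf a := by
    intro a b hab h
    rcases Nat.lt_trichotomy (p₂.idxOf a) (p₂.idxOf b) with h' | h' | h'
    · exact absurd h' h
    · exact absurd (idx2_inj h') hab
    · exact h'
  set D : Fin 7 → Fin 7 → Prop :=
    fun a b => ¬ B4.Adj a b ∧ a ≠ b ∧ p₁.idxOf a < p₁.idxOf b with hD
  have htrans : ∀ a b c, D a b → D b c → D a c := by
    rintro a b c ⟨hna, hab, hl1⟩ ⟨hnb, hbc, hl2⟩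
    have hac : a ≠ c := by
      rintro rfl
      exact Nat.lt_asymm hl1 hl2
    have h2ab : ¬ p₂.idxOf a < p₂.idxOf b := fun hh =>
      hna ((hadj a b hab).2 ⟨fun _ => hh, fun _ => hl1⟩)
    have h2bc : ¬ p₂.idxOf b < p₂.idxOf c := fun hh =>
      hnb ((hadj b c hbc).2 ⟨fun _ => hh, fun _ => hl2⟩)
    have h2ca : p₂.idxOf c < p₂.idxOf a :=
      Nat.lt_trans (flip2 b c hbc h2bc) (flip2 a b hab h2ab)
    have hnac : ¬ B4.Adj a c := fun hAdj =>
      Nat.lt_asymm h2ca (((hadj a c hac).1 hAdj).1 (Nat.lt_trans hl1 hl2))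
    exact ⟨hnac, hac, Nat.lt_trans hl1 hl2⟩
  have hmemlt : ∀ v : Fin 7, p₁.idxOf v < 7 := fun v => by
    have h := List.idxOf_lt_length_iff.2 (h₁.2 v); omega
  set pos : Fin 7 → Fin 7 := fun v => ⟨p₁.idxOf v, hmemlt v⟩ with hpos
  have pinj : ∀ {a b : Fin 7}, pos a = pos b → a = b :=
    fun {a b} h => idx1_inj (congrArg Fin.val h)
  have hfinal : leafB (pos 0) (pos 1) (pos 2) (pos 3) (pos 4) (pos 5) (pos 6) = true := by
    rcases key (pos 0) (pos 1) with h | h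
    · exact absurd (pinj h) (by decide)
    rcases h (pos 2) with (h' | h') | h
    · exact absurd (pinj h') (by decide)
    · exact absurd (pinj h') (by decide)
    rcases h (pos 3) with (h' | h' | h') | h
    · exact absurd (pinj h') (by decide)
    · exact absurd (pinj h') (by decide)
    · exact absurd (pinj h') (by decide)
    rcases h (pos 4) with (h' | h' | h' | h') | h
    · exact absurd (pinj h') (by decide)
    · exact absurd (pinj h') (by decide)
    · exact absurd (pinj h') (by decide)
    · exact absurd (pinj h') (by decide)
    rcases h (pos 5) with (h' | h' | h' | h' | h') | h
    · exact absurd (pinj h') (by decide)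
    · exact absurd (pinj h') (by decide)
    · exact absurd (pinj h') (by decide)
    · exact absurd (pinj h') (by decide)
    · exact absurd (pinj h') (by decide)
    rcases h (pos 6) with (h' | h' | h' | h' | h' | h') | h
    · exact absurd (pinj h') (by decide)
    · exact absurd (pinj h') (by decide)
    · exact absurd (pinj h') (by decide)
    · exact absurd (pinj h') (by decide)
    · exact absurd (pinj h') (by decide)
    · exact absurd (pinj h') (by decide)
    exact h
  exact leaf_contra pos D
    (fun a b hna hab hlt => ⟨hna, hab, hlt⟩)
    htrans
    (fun a b hd => ⟨hd.1, hd.2.2⟩)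
    hfinal

def q1 : List (Fin 7) := [1, 0, 4, 5, 6, 3, 2]
def q2 : List (Fin 7) := [1, 0, 4, 6, 3, 5, 2]
def q3 : List (Fin 7) := [6, 1, 5, 0, 3, 2, 4]

theorem prn3 : PrnLe B4 3 := by
  refine ⟨[q1, q2, q3], rfl, ?_, ?_⟩
  · intro p hp
    fin_cases hp <;> exact ⟨by decide, by decide⟩
  · intro a b hab
    revert hab
    revert a b
    decide

theorem stmt15 : (¬ ∃ p₁ p₂ : List (Fin 7), IsPermutationOf p₁ ∧ IsPermutationOf p₂ ∧
      Represents (p₁ ++ p₂) B4) ∧ PrnLe B4 3 ∧ ¬ PrnLe B4 2 := by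
  refine ⟨noTwo, prn3, ?_⟩
  rintro ⟨ps, hlen, hperm, hrep⟩
  rcases List.length_eq_two.1 hlen with ⟨p₁, p₂, rfl⟩
  refine noTwo ⟨p₁, p₂, hperm p₁ (by simp), hperm p₂ (by simp), ?_⟩
  simpa [List.flatten] using hrep
end
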